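/- arXiv:1411.4093 — 5 statements merged into one kernel-verified Lean document; each statement's English description precedes it below -/
import Mathlib

section
/- Let Γ be a countable discrete group and Λ ≤ Γ a subgroup. Then Λ is singular in Γ if and only if the singularity property holds for the canonical action of Γ on its Stone–Čech compactification βΓ; that is, if and only if for every Λ-invariant regular Borel probability measure μ on βΓ and every g ∈ Γ \ Λ, the measures g·μ and μ are mutually singular. -/
/-- A witness that `Λ` is a singular subgroup of `Γ`: a nonempty compact Hausdorff space `X`
with a continuous action of `Γ` by homeomorphisms such that for every `Λ`-invariant regular
Borel probability measure `μ` on `X` and every `g ∉ Λ`, the push-forward `g · μ` and `μ` are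
mutually singular. -/
structure SingularityWitness {Γ : Type*} [Group Γ] (Λ : Subgroup Γ) where
  /-- The compact `Γ`-space. -/
  X : Type
  [ts : TopologicalSpace X]
  [ms : MeasurableSpace X]
  [bs : BorelSpace X]
  [cs : CompactSpace X]
  [t2 : T2Space X]
  [ne : Nonempty X]
  /-- The action of `Γ` on `X` by homeomorphisms. -/
  ρ : Γ → X ≃ₜ X
  ρ_one : ρ 1 = Homeomorph.refl X
  ρ_mul : ∀ g h : Γ, ρ (g * h) = (ρ h).trans (ρ g)
  singular : ∀ μ : MeasureTheory.Measure X, MeasureTheory.IsProbabilityMeasure μ →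
    μ.Regular → (∀ t ∈ Λ, μ.map (ρ t) = μ) →
    ∀ g ∉ Λ, (μ.map (ρ g)).MutuallySingular μ

/-- `Λ` is a singular subgroup of `Γ`. -/
def IsSingularIn {Γ : Type*} [Group Γ] (Λ : Subgroup Γ) : Prop :=
  Nonempty (SingularityWitness Λ)

noncomputable instance {Γ : Type} [TopologicalSpace Γ] :
    MeasurableSpace (StoneCech Γ) := borel _

instance {Γ : Type} [TopologicalSpace Γ] : BorelSpace (StoneCech Γ) := ⟨rfl⟩

open MeasureTheory

/-- `Λ` is singular in `Γ` if and only if the singularity property holds for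
the canonical action of `Γ` on its Stone–Čech compactification `βΓ` (here `ρ` is the canonical
action: the unique continuous extension of left translation). -/
theorem isSingularIn_iff_singular_on_stoneCech
    {Γ : Type} [Group Γ] [Countable Γ] [TopologicalSpace Γ] [DiscreteTopology Γ]
    (Λ : Subgroup Γ)
    (ρ : Γ → StoneCech Γ ≃ₜ StoneCech Γ)
    (ρ_one : ρ 1 = Homeomorph.refl (StoneCech Γ))
    (ρ_mul : ∀ g h : Γ, ρ (g * h) = (ρ h).trans (ρ g))
    (ρ_canonical : ∀ g x : Γ, ρ g (stoneCechUnit x) = stoneCechUnit (g * x)) :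
    IsSingularIn Λ ↔
      ∀ μ : Measure (StoneCech Γ), IsProbabilityMeasure μ → μ.Regular →
        (∀ t ∈ Λ, μ.map (ρ t) = μ) →
        ∀ g ∉ Λ, (μ.map (ρ g)).MutuallySingular μ := by
  constructor
  · rintro ⟨w⟩
    letI := w.ts; letI := w.ms; haveI := w.bs; haveI := w.cs; haveI := w.t2; haveI := w.ne
    intro μ hprob hreg hinv g hg
    obtain ⟨x₀⟩ := w.ne
    -- the orbit map and its Stone–Čech extension
    set f : Γ → w.X := fun a => w.ρ a x₀ with hf
    have hfc : Continuous f := continuous_of_discreteTopology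
    set π : StoneCech Γ → w.X := stoneCechExtend hfc with hπ
    have hπc : Continuous π := continuous_stoneCechExtend hfc
    have hπm : Measurable π := hπc.measurable
    -- equivariance of π
    have hequiv : ∀ a : Γ, ∀ y : StoneCech Γ, π (ρ a y) = w.ρ a (π y) := by
      intro a
      have h1 : Continuous fun y => π (ρ a y) := hπc.comp (ρ a).continuous
      have h2 : Continuous fun y => w.ρ a (π y) := (w.ρ a).continuous.comp hπc
      have := Continuous.ext_on denseRange_stoneCechUnit h1 h2 ?_
      · exact fun y => congrFun this y
      · rintro _ ⟨x, rfl⟩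
        simp only [ρ_canonical]
        have e1 : π (stoneCechUnit (a * x)) = f (a * x) := congrFun (stoneCechExtend_extends hfc) _
        have e2 : π (stoneCechUnit x) = f x := congrFun (stoneCechExtend_extends hfc) _
        rw [e1, e2, hf]
        simp only [w.ρ_mul a x, Homeomorph.trans_apply]
    -- the pushforward measure on X
    set ν : Measure w.X := μ.map π with hν
    haveI : IsProbabilityMeasure ν := Measure.isProbabilityMeasure_map hπm.aemeasurable
    haveI : μ.InnerRegular := by infer_instance
    haveI : ν.InnerRegular := Measure.InnerRegular.map_of_continuous hπc
    have hνreg : ν.Regular := by infer_instance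
    -- commutation of pushforwards
    have hcomm : ∀ a : Γ, ν.map (w.ρ a) = (μ.map (ρ a)).map π := by
      intro a
      rw [hν, Measure.map_map (w.ρ a).continuous.measurable hπm,
        Measure.map_map hπm (ρ a).continuous.measurable]
      congr 1
      funext y
      exact (hequiv a y).symm
    -- ν is Λ-invariant
    have hνinv : ∀ t ∈ Λ, ν.map (w.ρ t) = ν := by
      intro t ht
      rw [hcomm t, hinv t ht]
    obtain ⟨s, hs, hs1, hs2⟩ := w.singular ν inferInstance hνreg hνinv g hg
    refine ⟨π ⁻¹' s, hπm hs, ?_, ?_⟩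
    · have : (μ.map (ρ g)) (π ⁻¹' s) = ((μ.map (ρ g)).map π) s := by
        rw [Measure.map_apply hπm hs]
      rw [this, ← hcomm g, hs1]
    · have : μ (π ⁻¹' s)ᶜ = ν sᶜ := by
        rw [hν, Measure.map_apply hπm hs.compl]
        rfl
      rw [this, hs2]
  · intro h
    haveI : Nonempty (StoneCech Γ) := ⟨stoneCechUnit 1⟩
    refine ⟨⟨StoneCech Γ, ρ, ρ_one, ρ_mul, h⟩⟩
end

section
/- Let Γ be a countable discrete group and Λ ≤ Γ an amenable subgroup which is singular in Γ. Then Λ is maximal amenable in Γ: every amenable subgroup H of Γ with Λ ≤ H satisfies H = Λ. -/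
open scoped BoundedContinuousFunction

/-- A discrete group `Λ` is amenable if there exists a left-invariant mean on the space of
bounded real-valued functions on `Λ`: a linear functional `m` with `m 1 = 1`, `m f ≥ 0`
whenever `f ≥ 0`, and `m (x ↦ f (t⁻¹ x)) = m f` for all `t ∈ Λ` and bounded `f`. -/
def IsAmenable (Λ : Type*) [Group Λ] : Prop :=
  letI : TopologicalSpace Λ := ⊥
  ∃ m : (Λ →ᵇ ℝ) →ₗ[ℝ] ℝ,
    m 1 = 1 ∧
    (∀ f : Λ →ᵇ ℝ, (∀ x, 0 ≤ f x) → 0 ≤ m f) ∧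
    ∀ (t : Λ) (f : Λ →ᵇ ℝ),
      m (f.compContinuous ⟨fun x => t⁻¹ * x, continuous_bot⟩) = m f

/-!
An amenable group `H` acting on a compact Hausdorff space `X` fixes a regular Borel probability
measure: average the orbit functions `g ↦ f (g • x₀)`, `f ∈ C(X)`, with an invariant mean and
represent the resulting positive functional on `C(X)` by the Riesz–Markov–Kakutani theorem.
If `Λ ≤ H` and `g ∈ H \ Λ`, this measure `μ` is `Λ`-invariant and `g • μ = μ`, so singularity
gives `μ ⟂ μ`, i.e. `μ = 0`, which is absurd.
-/

open scoped BoundedContinuousFunction CompactlySupported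
open MeasureTheory

section OrbitMean

variable {G : Type*} [Group G] [TopologicalSpace G] [DiscreteTopology G]
  {X : Type*} [TopologicalSpace X] (φ : G →* (X ≃ₜ X)) (x₀ : X)

noncomputable def orbitFunction : (X →ᵇ ℝ) →L[ℝ] (G →ᵇ ℝ) :=
  BoundedContinuousFunction.compContinuousCLM ℝ ℝ
    ⟨fun g => φ g x₀, continuous_of_discreteTopology⟩

@[simp]
lemma orbitFunction_apply (f : X →ᵇ ℝ) (g : G) : orbitFunction φ x₀ f g = f (φ g x₀) := rfl

@[simp]
lemma orbitFunction_one : orbitFunction φ x₀ 1 = 1 := rfl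

variable (m : (G →ᵇ ℝ) →ₗ[ℝ] ℝ)

lemma orbitFunction_compContinuous
    (hm_inv : ∀ (t : G) (f : G →ᵇ ℝ),
      m (f.compContinuous ⟨fun x => t⁻¹ * x, continuous_of_discreteTopology⟩) = m f)
    (t : G) (f : X →ᵇ ℝ) :
    m (orbitFunction φ x₀ (f.compContinuous (φ t : C(X, X)))) = m (orbitFunction φ x₀ f) := by
  rw [← hm_inv t⁻¹ (orbitFunction φ x₀ f)]
  congr 1
  ext g
  simp

variable [T2Space X] (hm_nonneg : ∀ f : G →ᵇ ℝ, (∀ x, 0 ≤ f x) → 0 ≤ m f)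

noncomputable def orbitMean : C_c(X, ℝ) →ₚ[ℝ] ℝ :=
  PositiveLinearMap.mk₀ (m ∘ₗ (orbitFunction φ x₀).toLinearMap ∘ₗ
    { toFun f := f.toBoundedContinuousFunction
      map_add' _ _ := rfl
      map_smul' _ _ := rfl })
    fun _ hf => hm_nonneg _ fun g => hf (φ g x₀)

variable [MeasurableSpace X] [BorelSpace X] [CompactSpace X]

lemma integral_rieszMeasure_orbitMean (f : X →ᵇ ℝ) :
    ∫ x, f x ∂(RealRMK.rieszMeasure (orbitMean φ x₀ m hm_nonneg)) = m (orbitFunction φ x₀ f) :=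
  RealRMK.integral_rieszMeasure _ ⟨f.toContinuousMap, .of_compactSpace _⟩

lemma isProbabilityMeasure_rieszMeasure_orbitMean (hm_one : m 1 = 1) :
    IsProbabilityMeasure (RealRMK.rieszMeasure (orbitMean φ x₀ m hm_nonneg)) := by
  have h := integral_rieszMeasure_orbitMean φ x₀ m hm_nonneg 1
  simp only [BoundedContinuousFunction.coe_one, Pi.one_apply, integral_const, smul_eq_mul,
    mul_one, orbitFunction_one, hm_one] at h
  exact ⟨(ENNReal.toReal_eq_one_iff _).mp h⟩

lemma map_rieszMeasure_orbitMean
    (hm_inv : ∀ (t : G) (f : G →ᵇ ℝ),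
      m (f.compContinuous ⟨fun x => t⁻¹ * x, continuous_of_discreteTopology⟩) = m f)
    (t : G) :
    (RealRMK.rieszMeasure (orbitMean φ x₀ m hm_nonneg)).map (φ t) =
      RealRMK.rieszMeasure (orbitMean φ x₀ m hm_nonneg) := by
  have := Measure.Regular.map (μ := RealRMK.rieszMeasure (orbitMean φ x₀ m hm_nonneg)) (φ t)
  refine Measure.ext_of_integral_eq_on_compactlySupported fun f => ?_
  rw [integral_map (φ t).continuous.aemeasurable (map_continuous f).aestronglyMeasurable]
  calc ∫ x, f (φ t x) ∂(RealRMK.rieszMeasure (orbitMean φ x₀ m hm_nonneg))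
      = m (orbitFunction φ x₀ (f.toBoundedContinuousFunction.compContinuous (φ t : C(X, X)))) :=
        integral_rieszMeasure_orbitMean φ x₀ m hm_nonneg
          (f.toBoundedContinuousFunction.compContinuous (φ t : C(X, X)))
    _ = m (orbitFunction φ x₀ f.toBoundedContinuousFunction) :=
        orbitFunction_compContinuous φ x₀ m hm_inv t _
    _ = ∫ x, f x ∂(RealRMK.rieszMeasure (orbitMean φ x₀ m hm_nonneg)) :=
        (integral_rieszMeasure_orbitMean φ x₀ m hm_nonneg _).symm

end OrbitMean

theorem IsAmenable.exists_isProbabilityMeasure_regular_map_eq {G : Type*} [Group G]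
    {X : Type*} [TopologicalSpace X] [T2Space X] [CompactSpace X] [Nonempty X]
    [MeasurableSpace X] [BorelSpace X] (hG : IsAmenable G) (φ : G →* (X ≃ₜ X)) :
    ∃ μ : Measure X, IsProbabilityMeasure μ ∧ μ.Regular ∧ ∀ g, μ.map (φ g) = μ := by
  let _ : TopologicalSpace G := ⊥
  have : DiscreteTopology G := ⟨rfl⟩
  obtain ⟨m, hm_one, hm_nonneg, hm_inv⟩ := hG
  obtain ⟨x₀⟩ := ‹Nonempty X›
  exact ⟨_, isProbabilityMeasure_rieszMeasure_orbitMean φ x₀ m hm_nonneg hm_one, inferInstance,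
    map_rieszMeasure_orbitMean φ x₀ m hm_nonneg hm_inv⟩

attribute [local instance] SingularityWitness.ts SingularityWitness.ms SingularityWitness.bs
  SingularityWitness.cs SingularityWitness.t2 SingularityWitness.ne

theorem SingularityWitness.mem_of_map_eq {Γ : Type*} [Group Γ] {Λ : Subgroup Γ}
    (w : SingularityWitness Λ) {μ : Measure w.X} [IsProbabilityMeasure μ] [μ.Regular]
    (hΛ : ∀ t ∈ Λ, μ.map (w.ρ t) = μ) {g : Γ} (hg : μ.map (w.ρ g) = μ) : g ∈ Λ := by
  by_contra hgΛ
  have hsing := w.singular μ inferInstance inferInstance hΛ g hgΛ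
  rw [hg, Measure.MutuallySingular.self_iff] at hsing
  exact IsProbabilityMeasure.ne_zero μ hsing

theorem maximalAmenable_of_isSingularIn_general
    {Γ : Type} [Group Γ] (Λ : Subgroup Γ)
    (hsing : IsSingularIn Λ) :
    ∀ H : Subgroup Γ, IsAmenable H → Λ ≤ H → H = Λ := by
  intro H hH hΛH
  obtain ⟨w⟩ := hsing
  let φ : H →* (w.X ≃ₜ w.X) := (MonoidHom.mk' w.ρ w.ρ_mul).comp H.subtype
  obtain ⟨μ, _, _, hμ⟩ := hH.exists_isProbabilityMeasure_regular_map_eq φ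
  exact le_antisymm (fun g hg => w.mem_of_map_eq (fun t ht => hμ ⟨t, hΛH ht⟩) (hμ ⟨g, hg⟩)) hΛH

/-- An amenable subgroup which is singular in `Γ` is maximal amenable:
every amenable subgroup `H` of `Γ` containing `Λ` equals `Λ`. -/
theorem maximalAmenable_of_isSingularIn
    {Γ : Type} [Group Γ] [Countable Γ] (Λ : Subgroup Γ)
    (hamen : IsAmenable Λ) (hsing : IsSingularIn Λ) :
    ∀ H : Subgroup Γ, IsAmenable H → Λ ≤ H → H = Λ :=
  maximalAmenable_of_isSingularIn_general Λ hsing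
end

section
/- Let Γ be a countable discrete group and Λ ≤ Γ a subgroup. Assume that for every g ∈ Γ \ Λ, the operator 0 belongs to the norm-closure of the convex hull of {λ_{t g t⁻¹} : t ∈ Λ} in the bounded operators on ℓ²(Γ). Then for every net (ξ_i) of unit vectors in ℓ²(Γ) such that ‖λ_t ξ_i − ξ_i‖ → 0 for every t ∈ Λ, and for every g ∈ Γ \ Λ, the inner products ⟨λ_g ξ_i, ξ_i⟩ converge to 0. -/
noncomputable section
set_option maxHeartbeats 1000000
set_option synthInstance.maxHeartbeats 400000

theorem translate_mem {Γ : Type} [Group Γ] (g : Γ) (f : lp (fun _ : Γ => ℂ) 2) :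
    Memℓp (fun x : Γ => f (g⁻¹ * x)) 2 := by
  apply memℓp_gen (p := 2)
  have h : Summable fun i : Γ => ‖f i‖ ^ (2 : ENNReal).toReal :=
    (lp.memℓp f).summable (by norm_num)
  exact (Equiv.summable_iff (Equiv.mulLeft (g⁻¹ : Γ))).mpr h

/-- The left regular representation `λ_g`, `(λ_g ξ)(x) = ξ(g⁻¹ x)`, as a linear isometric
bijection of `ℓ²(Γ)`. -/
def lam {Γ : Type} [Group Γ] (g : Γ) :
    lp (fun _ : Γ => ℂ) 2 ≃ₗᵢ[ℂ] lp (fun _ : Γ => ℂ) 2 where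
  toFun f := ⟨fun x => f (g⁻¹ * x), translate_mem g f⟩
  invFun f := ⟨fun x => f (g * x), by have h := translate_mem g⁻¹ f; simp only [inv_inv] at h; exact h⟩
  left_inv f := by apply lp.ext; funext x; simp
  right_inv f := by apply lp.ext; funext x; simp
  map_add' f h := by apply lp.ext; funext x; simp [lp.coeFn_add]; rfl
  map_smul' c f := by apply lp.ext; funext x; simp [lp.coeFn_smul]
  norm_map' f := by
    rw [lp.norm_eq_tsum_rpow (by norm_num : (0:ℝ) < (2 : ENNReal).toReal),
        lp.norm_eq_tsum_rpow (by norm_num : (0:ℝ) < (2 : ENNReal).toReal)]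
    congr 1
    exact (Equiv.mulLeft (g⁻¹ : Γ)).tsum_eq (fun x => ‖f x‖ ^ (2 : ENNReal).toReal)

/-- The unitary `λ_g` as a bounded operator on `ℓ²(Γ)`. -/
def lamCLM {Γ : Type} [Group Γ] (g : Γ) :
    lp (fun _ : Γ => ℂ) 2 →L[ℂ] lp (fun _ : Γ => ℂ) 2 :=
  (lam g).toLinearIsometry.toContinuousLinearMap

/-!
Fix `g ∉ Λ` and an almost `Λ`-invariant net of unit vectors `ξ i`. The operators `A` with
`⟪A ξ i, ξ i⟫ - ⟪λ_g ξ i, ξ i⟫ → 0` form a convex set, which is norm-closed because the vector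
states `A ↦ ⟪A ξ i, ξ i⟫` are uniformly `1`-Lipschitz. It contains every `λ_{t g t⁻¹}` with `t ∈ Λ`,
since conjugating by the unitary `λ_t` moves a vector state by at most `2 ‖λ_t ξ i - ξ i‖`.
So it contains the closed convex hull of these operators, hence `0`, which is the claim.
-/

open Filter Topology
open scoped InnerProductSpace

section InnerProduct

variable {𝕜 E : Type*} [RCLike 𝕜] [NormedAddCommGroup E] [InnerProductSpace 𝕜 E]

theorem ContinuousLinearMap.norm_inner_apply_self_le (A : E →L[𝕜] E) {x : E} (hx : ‖x‖ ≤ 1) :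
    ‖⟪A x, x⟫_𝕜‖ ≤ ‖A‖ :=
  calc ‖⟪A x, x⟫_𝕜‖ ≤ ‖A x‖ * ‖x‖ := norm_inner_le_norm _ _
    _ ≤ ‖A‖ * ‖x‖ * ‖x‖ := by gcongr; exact A.le_opNorm x
    _ ≤ ‖A‖ * 1 * 1 := by gcongr
    _ = ‖A‖ := by ring

theorem ContinuousLinearMap.norm_inner_apply_self_sub_le (A : E →L[𝕜] E) {x y : E}
    (hx : ‖x‖ ≤ 1) (hy : ‖y‖ ≤ 1) :
    ‖⟪A x, x⟫_𝕜 - ⟪A y, y⟫_𝕜‖ ≤ 2 * ‖A‖ * ‖x - y‖ := by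
  have hsplit : ⟪A x, x⟫_𝕜 - ⟪A y, y⟫_𝕜 = ⟪A x, x - y⟫_𝕜 + ⟪A (x - y), y⟫_𝕜 := by
    rw [map_sub, inner_sub_right, inner_sub_left]; ring
  have h₁ : ‖⟪A x, x - y⟫_𝕜‖ ≤ ‖A‖ * ‖x - y‖ :=
    calc ‖⟪A x, x - y⟫_𝕜‖ ≤ ‖A x‖ * ‖x - y‖ := norm_inner_le_norm _ _
      _ ≤ ‖A‖ * ‖x - y‖ := by
        gcongr; exact (A.le_opNorm x).trans (mul_le_of_le_one_right (norm_nonneg A) hx)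
  have h₂ : ‖⟪A (x - y), y⟫_𝕜‖ ≤ ‖A‖ * ‖x - y‖ :=
    calc ‖⟪A (x - y), y⟫_𝕜‖ ≤ ‖A (x - y)‖ * ‖y‖ := norm_inner_le_norm _ _
      _ ≤ ‖A (x - y)‖ := mul_le_of_le_one_right (norm_nonneg _) hy
      _ ≤ ‖A‖ * ‖x - y‖ := A.le_opNorm _
  rw [hsplit]
  linarith [norm_add_le ⟪A x, x - y⟫_𝕜 ⟪A (x - y), y⟫_𝕜]

theorem ContinuousLinearMap.norm_inner_conj_apply_self_sub_le (U : E ≃ₗᵢ[𝕜] E) (A : E →L[𝕜] E)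
    {x : E} (hx : ‖x‖ ≤ 1) :
    ‖⟪U (A (U.symm x)), x⟫_𝕜 - ⟪A x, x⟫_𝕜‖ ≤ 2 * ‖A‖ * ‖U x - x‖ := by
  have hdist : ‖U.symm x - x‖ = ‖U x - x‖ := by
    rw [← U.norm_map, map_sub, U.apply_symm_apply, norm_sub_rev]
  rw [U.inner_map_eq_flip, ← hdist]
  exact A.norm_inner_apply_self_sub_le (by rwa [U.symm.norm_map]) hx

variable {ι : Type*} (l : Filter ι) (ξ : ι → E) (c : ι → 𝕜)

def asymptoticStateSet : Set (E →L[𝕜] E) :=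
  {A | Tendsto (fun i => ⟪A (ξ i), ξ i⟫_𝕜 - c i) l (𝓝 0)}

theorem convex_asymptoticStateSet [NormedSpace ℝ E] [IsScalarTower ℝ 𝕜 E] :
    Convex ℝ (asymptoticStateSet l ξ c) := by
  intro A hA B hB a b _ _ hab
  have hcomb : ∀ i, ⟪(a • A + b • B) (ξ i), ξ i⟫_𝕜 - c i
      = a • (⟪A (ξ i), ξ i⟫_𝕜 - c i) + b • (⟪B (ξ i), ξ i⟫_𝕜 - c i) := by
    intro i
    have hab' : (a : 𝕜) + b = 1 := by exact_mod_cast hab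
    simp only [add_apply, smul_apply, inner_add_left, RCLike.real_smul_eq_coe_smul (K := 𝕜),
      inner_smul_real_left, smul_eq_mul]
    linear_combination c i * hab'
  simpa only [asymptoticStateSet, Set.mem_ofPred_eq, hcomb, smul_zero, add_zero] using
    (hA.const_smul a).add (hB.const_smul b)

theorem isClosed_asymptoticStateSet (hξ : ∀ i, ‖ξ i‖ ≤ 1) :
    IsClosed (asymptoticStateSet l ξ c) := by
  refine isClosed_of_closure_subset fun A hA => Metric.tendsto_nhds.2 fun ε hε => ?_
  obtain ⟨B, hB, hAB⟩ := Metric.mem_closure_iff.1 hA (ε / 2) (half_pos hε)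
  filter_upwards [Metric.tendsto_nhds.1 hB (ε / 2) (half_pos hε)] with i hi
  have hsplit : ⟪A (ξ i), ξ i⟫_𝕜 - c i = ⟪(A - B) (ξ i), ξ i⟫_𝕜 + (⟪B (ξ i), ξ i⟫_𝕜 - c i) := by
    rw [sub_apply, inner_sub_left]; ring
  rw [dist_zero_right] at hi ⊢
  rw [dist_eq_norm] at hAB
  rw [hsplit]
  linarith [norm_add_le ⟪(A - B) (ξ i), ξ i⟫_𝕜 (⟪B (ξ i), ξ i⟫_𝕜 - c i),
    (A - B).norm_inner_apply_self_le (hξ i)]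

theorem tendsto_zero_of_zero_mem_asymptoticStateSet (h : 0 ∈ asymptoticStateSet l ξ c) :
    Tendsto c l (𝓝 0) := by
  simpa [asymptoticStateSet] using h.neg

end InnerProduct

theorem lamCLM_conj_apply {Γ : Type} [Group Γ] (t g : Γ) (f : lp (fun _ : Γ => ℂ) 2) :
    lamCLM (t * g * t⁻¹) f = lam t (lamCLM g ((lam t).symm f)) := by
  apply lp.ext; funext x
  show f ((t * g * t⁻¹)⁻¹ * x) = f (t * (g⁻¹ * (t⁻¹ * x)))
  simp only [mul_inv_rev, inv_inv, mul_assoc]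

theorem conj_mem_asymptoticStateSet {Γ : Type} [Group Γ] {ι : Type*} {l : Filter ι}
    {ξ : ι → lp (fun _ : Γ => ℂ) 2} (hξ : ∀ i, ‖ξ i‖ ≤ 1) {t : Γ}
    (ht : Tendsto (fun i => ‖lamCLM t (ξ i) - ξ i‖) l (𝓝 0)) (g : Γ) :
    lamCLM (t * g * t⁻¹) ∈ asymptoticStateSet l ξ fun i => ⟪lamCLM g (ξ i), ξ i⟫_ℂ := by
  refine squeeze_zero_norm (fun i => ?_) (by simpa using ht.const_mul (2 * ‖lamCLM g‖))
  rw [lamCLM_conj_apply]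
  exact (lamCLM g).norm_inner_conj_apply_self_sub_le (lam t) (hξ i)

open scoped InnerProductSpace in
theorem inner_tendsto_zero_of_zero_mem_closure_convexHull_general
    {Γ : Type} [Group Γ] (Λ : Subgroup Γ)
    (hconv : ∀ g ∉ Λ, (0 : lp (fun _ : Γ => ℂ) 2 →L[ℂ] lp (fun _ : Γ => ℂ) 2) ∈
      closure (convexHull ℝ {T | ∃ t ∈ Λ, T = lamCLM (t * g * t⁻¹)})) :
    ∀ (ι : Type) (l : Filter ι), l.NeBot →
      ∀ ξ : ι → lp (fun _ : Γ => ℂ) 2, (∀ i, ‖ξ i‖ = 1) →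
      (∀ t ∈ Λ, Filter.Tendsto (fun i => ‖lamCLM t (ξ i) - ξ i‖) l (nhds 0)) →
      ∀ g ∉ Λ, Filter.Tendsto (fun i => ⟪lamCLM g (ξ i), ξ i⟫_ℂ) l (nhds 0) := by
  intro ι l _ ξ hunit halmost g hg
  have hξ : ∀ i, ‖ξ i‖ ≤ 1 := fun i => (hunit i).le
  apply tendsto_zero_of_zero_mem_asymptoticStateSet l ξ
  have hconj : {T | ∃ t ∈ Λ, T = lamCLM (t * g * t⁻¹)} ⊆
      asymptoticStateSet l ξ fun i => ⟪lamCLM g (ξ i), ξ i⟫_ℂ := by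
    rintro _ ⟨t, ht, rfl⟩
    exact conj_mem_asymptoticStateSet hξ (halmost t ht) g
  exact closure_minimal (convexHull_min hconj (convex_asymptoticStateSet l ξ _))
    (isClosed_asymptoticStateSet l ξ _ hξ) (hconv g hg)

open scoped InnerProductSpace in
/-- If for every `g ∉ Λ` the operator `0` lies in the norm-closure of the
convex hull of `{λ_{t g t⁻¹} : t ∈ Λ}`, then for every net `(ξ_i)` of almost `Λ`-invariant
unit vectors in `ℓ²(Γ)` and every `g ∉ Λ`, the inner products `⟨λ_g ξ_i, ξ_i⟩` tend to `0`. -/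
theorem inner_tendsto_zero_of_zero_mem_closure_convexHull
    {Γ : Type} [Group Γ] [Countable Γ] (Λ : Subgroup Γ)
    (hconv : ∀ g ∉ Λ, (0 : lp (fun _ : Γ => ℂ) 2 →L[ℂ] lp (fun _ : Γ => ℂ) 2) ∈
      closure (convexHull ℝ {T | ∃ t ∈ Λ, T = lamCLM (t * g * t⁻¹)})) :
    ∀ (ι : Type) (l : Filter ι), l.NeBot →
      ∀ ξ : ι → lp (fun _ : Γ => ℂ) 2, (∀ i, ‖ξ i‖ = 1) →
      (∀ t ∈ Λ, Filter.Tendsto (fun i => ‖lamCLM t (ξ i) - ξ i‖) l (nhds 0)) →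
      ∀ g ∉ Λ, Filter.Tendsto (fun i => ⟪lamCLM g (ξ i), ξ i⟫_ℂ) l (nhds 0) :=
  inner_tendsto_zero_of_zero_mem_closure_convexHull_general Λ hconv
end
end

section
/- Let Λ be a countable discrete group, Λ₀ ≤ Λ a subgroup, and θ : Λ₀ → Λ an injective group homomorphism. Let Γ = HNN(Λ, Λ₀, θ) be the corresponding HNN extension, i.e., Γ is generated by Λ together with a stable letter t subject to the relations t⁻¹ g t = θ(g) for all g ∈ Λ₀, and the canonical homomorphism Λ → Γ is injective. If both Λ₀ and θ(Λ₀) have infinite index in Λ, then the image of Λ in Γ is singular in Γ. -/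
open MeasureTheory Pointwise Function

theorem MeasureTheory.measure_eq_zero_of_pairwise_disjoint {α : Type*} [MeasurableSpace α]
    (μ : Measure α) [IsFiniteMeasure μ] {s : ℕ → Set α} {t : Set α}
    (hd : Pairwise (Disjoint on s)) (hm : ∀ i, MeasurableSet (s i)) (he : ∀ i, μ (s i) = μ t) :
    μ t = 0 := by
  by_contra ht
  apply measure_ne_top μ (⋃ i, s i)
  rw [measure_iUnion hd hm, tsum_congr he]
  exact ENNReal.tsum_const_eq_top_of_ne_zero ht

theorem MeasureTheory.Measure.mutuallySingular_map_of_measure_compl_singleton {α : Type*}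
    [MeasurableSpace α] [MeasurableSingletonClass α] {μ : Measure α} {x : α} {f : α → α}
    (hf : Measurable f) (hfx : f x ≠ x) (hμ : μ {x}ᶜ = 0) : μ.map f ⟂ₘ μ := by
  refine ⟨{x}, measurableSet_singleton x, ?_, by simpa using hμ⟩
  rw [Measure.map_apply hf (measurableSet_singleton x)]
  exact measure_mono_null (fun y hy (hyx : y = x) => hfx (hyx ▸ hy)) hμ

theorem isSingularIn_of_invariant_measures_concentrated_at {K : Type*} [Group K]
    (Λ : Subgroup K) (X : Type) [TopologicalSpace X] [MeasurableSpace X] [BorelSpace X]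
    [CompactSpace X] [T2Space X] (ρ : K → X ≃ₜ X) (ρ_one : ρ 1 = Homeomorph.refl X)
    (ρ_mul : ∀ g h, ρ (g * h) = (ρ h).trans (ρ g)) (x : X)
    (hμ : ∀ μ : Measure X, IsProbabilityMeasure μ → (∀ t ∈ Λ, μ.map (ρ t) = μ) → μ {x}ᶜ = 0)
    (hx : ∀ g ∉ Λ, ρ g x ≠ x) : IsSingularIn Λ :=
  ⟨{ X, ρ, ρ_one, ρ_mul, ne := ⟨x⟩,
     singular := fun μ hprob _ hinv g hg =>
       Measure.mutuallySingular_map_of_measure_compl_singleton (ρ g).continuous.measurable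
         (hx g hg) (hμ μ hprob hinv) }⟩

theorem IsSingularIn.comap {K L : Type*} [Group K] [Group L] {Λ : Subgroup L}
    (hΛ : IsSingularIn Λ) (f : K →* L) (hf : Λ ≤ f.range) : IsSingularIn (Λ.comap f) := by
  obtain ⟨W⟩ := hΛ
  exact ⟨{ W with
    ρ := fun g => W.ρ (f g)
    ρ_one := by simpa using W.ρ_one
    ρ_mul := fun g h => by simpa using W.ρ_mul (f g) (f h)
    singular := fun μ hμ hreg hinv g hg => W.singular μ hμ hreg
      (fun t ht => by obtain ⟨s, rfl⟩ := hf ht; exact hinv s ht) (f g) hg }⟩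

section CodeSpace

variable {K ι : Type} [Group K] (S : ι → Set K)

open scoped Classical in
noncomputable def memCode (d : K) : K × ι → Bool := fun p => decide (d ∈ p.1 • S p.2)

def codeSpace : Set (K × ι → Bool) := closure (Set.range (memCode S))

variable {S}

theorem memCode_mem_codeSpace (d : K) : memCode S d ∈ codeSpace S :=
  subset_closure ⟨d, rfl⟩

theorem memCode_eq_true {d : K} {p : K × ι} : memCode S d p = true ↔ d ∈ p.1 • S p.2 := by
  simp [memCode]

theorem memCode_eq_false {d : K} {p : K × ι} : memCode S d p = false ↔ d ∉ p.1 • S p.2 := by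
  simp [memCode]

theorem apply_imp_of_mem_codeSpace {p q : K × ι} {a b : Bool}
    (h : ∀ d, memCode S d p = a → memCode S d q = b) {f : K × ι → Bool}
    (hf : f ∈ codeSpace S) : f p = a → f q = b := by
  have hclosed : IsClosed {f : K × ι → Bool | f p = a → f q = b} :=
    isClosed_imp ((isOpen_discrete {a}).preimage (continuous_apply (A := fun _ => Bool) p))
      ((isClosed_discrete {b}).preimage (continuous_apply (A := fun _ => Bool) q))
  exact closure_minimal (Set.range_subset_iff.2 h) hclosed hf

variable (ι) in
def codeShift (g : K) : (K × ι → Bool) ≃ₜ (K × ι → Bool) where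
  toFun f p := f (g⁻¹ * p.1, p.2)
  invFun f p := f (g * p.1, p.2)
  left_inv f := by simp
  right_inv f := by simp
  continuous_toFun := by fun_prop
  continuous_invFun := by fun_prop

@[simp]
theorem codeShift_apply (g : K) (f : K × ι → Bool) (p : K × ι) :
    codeShift ι g f p = f (g⁻¹ * p.1, p.2) :=
  rfl

theorem codeShift_memCode (g d : K) : codeShift ι g (memCode S d) = memCode S (g * d) := by
  ext p
  simp [memCode, Set.mem_smul_set_iff_inv_smul_mem, mul_assoc]

theorem image_codeShift_codeSpace (g : K) : codeShift ι g '' codeSpace S = codeSpace S := by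
  have : codeShift ι g ∘ memCode S = memCode S ∘ (g * ·) := funext (codeShift_memCode g)
  rw [codeSpace, Homeomorph.image_closure, ← Set.range_comp, this,
    (mul_left_surjective g).range_comp]

variable (S) in
def codeAction (g : K) : codeSpace S ≃ₜ codeSpace S :=
  (codeShift ι g).subtype fun f => by
    conv_rhs => rw [← image_codeShift_codeSpace g]
    exact (codeShift ι g).injective.mem_set_image.symm

@[simp]
theorem codeAction_coe (g : K) (f : codeSpace S) :
    (codeAction S g f : K × ι → Bool) = codeShift ι g f :=
  rfl

variable {Λ : Subgroup K}

theorem memCode_one_eq_false (hΛ : ∀ c, Disjoint (S c) Λ) {h : K} (hh : h ∈ Λ) (c : ι) :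
    memCode S 1 (h, c) = false :=
  memCode_eq_false.2 fun h1 => Set.disjoint_left.1 (hΛ c)
    (by simpa [Set.mem_smul_set_iff_inv_smul_mem] using h1) (inv_mem hh)

theorem eq_of_mem_codeSpace_of_forall_apply_eq_false
    (hnested : ∀ (g : K) c, ∃ h ∈ Λ, ∃ c', g • S c ⊆ h • S c' ∨ (g • S c)ᶜ ⊆ h • S c')
    {f f' : K × ι → Bool} (hf : f ∈ codeSpace S) (hf' : f' ∈ codeSpace S)
    (h0 : ∀ h ∈ Λ, ∀ c, f (h, c) = false) (h0' : ∀ h ∈ Λ, ∀ c, f' (h, c) = false) :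
    f = f' := by
  funext ⟨g, c⟩
  obtain ⟨h, hh, c', a, ha⟩ : ∃ h ∈ Λ, ∃ c' a,
      ∀ d, memCode S d (h, c') = false → memCode S d (g, c) = a := by
    obtain ⟨h, hh, c', hsub | hsub⟩ := hnested g c
    · exact ⟨h, hh, c', false, fun d hd =>
        memCode_eq_false.2 fun hdg => memCode_eq_false.1 hd (hsub hdg)⟩
    · exact ⟨h, hh, c', true, fun d hd =>
        memCode_eq_true.2 (by_contra fun hdg => memCode_eq_false.1 hd (hsub hdg))⟩
  exact (apply_imp_of_mem_codeSpace ha hf (h0 h hh c')).trans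
    (apply_imp_of_mem_codeSpace ha hf' (h0' h hh c')).symm

section Measure

variable [MeasurableSpace (codeSpace S)] [BorelSpace (codeSpace S)] {μ : Measure (codeSpace S)}

theorem measurableSet_setOf_apply (p : K × ι) :
    MeasurableSet {f : codeSpace S | f.1 p = true} := by
  have hcont : Continuous fun f : codeSpace S => (f : K × ι → Bool) p :=
    (continuous_apply p).comp continuous_subtype_val
  exact hcont.measurable (measurableSet_singleton true)

theorem measure_setOf_mul_apply (hinv : ∀ t ∈ Λ, μ.map (codeAction S t) = μ) {h : K}
    (hh : h ∈ Λ) (k : K) (c : ι) :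
    μ {f : codeSpace S | f.1 (h * k, c) = true} = μ {f | f.1 (k, c) = true} := by
  have : {f : codeSpace S | f.1 (k, c) = true} =
      codeAction S h ⁻¹' {f | f.1 (h * k, c) = true} := by
    ext f
    simp
  rw [this, ← Measure.map_apply (codeAction S h).continuous.measurable
    (measurableSet_setOf_apply _), hinv h hh]

theorem measure_setOf_apply_eq_zero [IsFiniteMeasure μ]
    (htranslates : ∀ c, ∃ b : ℕ → K, (∀ i, b i ∈ Λ) ∧ Pairwise (Disjoint on fun i => b i • S c))
    (hinv : ∀ t ∈ Λ, μ.map (codeAction S t) = μ) {h : K} (hh : h ∈ Λ) (c : ι) :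
    μ {f : codeSpace S | f.1 (h, c) = true} = 0 := by
  obtain ⟨b, hbΛ, hb⟩ := htranslates c
  have h1 : μ {f : codeSpace S | f.1 (1, c) = true} = 0 := by
    refine measure_eq_zero_of_pairwise_disjoint μ
      (s := fun i => {f : codeSpace S | f.1 (b i, c) = true}) (fun i j hij => ?_)
      (fun i => measurableSet_setOf_apply _)
      (fun i => by simpa using measure_setOf_mul_apply hinv (hbΛ i) 1 c)
    refine Set.disjoint_left.2 fun f hfi hfj => ?_
    have := apply_imp_of_mem_codeSpace (p := (b i, c)) (q := (b j, c)) (a := true) (b := false)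
      (fun d hd => memCode_eq_false.2 fun hdj =>
        Set.disjoint_left.1 (hb hij) (memCode_eq_true.1 hd) hdj) f.2 hfi
    simp_all
  simpa [h1] using measure_setOf_mul_apply hinv hh 1 c

end Measure

variable (S) in
theorem isSingularIn_of_halfSpaces [Countable ι] (Λ : Subgroup K) [Countable Λ]
    (hΛ : ∀ c, Disjoint (S c) Λ)
    (htranslates : ∀ c, ∃ b : ℕ → K, (∀ i, b i ∈ Λ) ∧ Pairwise (Disjoint on fun i => b i • S c))
    (hnested : ∀ (g : K) c, ∃ h ∈ Λ, ∃ c', g • S c ⊆ h • S c' ∨ (g • S c)ᶜ ⊆ h • S c')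
    (hsep : ∀ g ∉ Λ, ∃ h ∈ Λ, ∃ c, g ∈ h • S c) : IsSingularIn Λ := by
  let : MeasurableSpace (codeSpace S) := borel _
  have : BorelSpace (codeSpace S) := ⟨rfl⟩
  have : CompactSpace (codeSpace S) := isCompact_iff_compactSpace.1 isClosed_closure.isCompact
  let pt : codeSpace S := ⟨memCode S 1, memCode_mem_codeSpace 1⟩
  refine isSingularIn_of_invariant_measures_concentrated_at Λ (codeSpace S) (codeAction S)
    (by ext; simp) (fun g h => by ext; simp [mul_assoc]) pt (fun μ _ hinv => ?_) ?_
  · have hsub : ({pt}ᶜ : Set (codeSpace S)) ⊆ ⋃ (h : Λ) (c : ι), {f | f.1 (h, c) = true} := by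
      intro f hf
      by_contra hf'
      simp only [Set.mem_iUnion, Set.mem_ofPred_eq, not_exists, Bool.not_eq_true] at hf'
      exact hf (Subtype.ext (eq_of_mem_codeSpace_of_forall_apply_eq_false hnested f.2 pt.2
        (fun h hh c => hf' ⟨h, hh⟩ c) (fun h hh c => memCode_one_eq_false hΛ hh c)))
    exact measure_mono_null hsub (measure_iUnion_null fun h => measure_iUnion_null fun c =>
      measure_setOf_apply_eq_zero htranslates hinv h.2 c)
  · intro g hg hfix
    obtain ⟨h, hh, c, hgc⟩ := hsep g hg
    have := congr_arg (fun f : codeSpace S => f.1 (h, c)) hfix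
    simp only [codeAction_coe, pt, codeShift_memCode, mul_one] at this
    simp [memCode_eq_true (p := (h, c)) |>.2 hgc, memCode_one_eq_false hΛ hh] at this

end CodeSpace

theorem Int.units_eq_neg_of_ne {u v : ℤˣ} (h : u ≠ v) : u = -v := by
  rcases Int.units_eq_one_or u with rfl | rfl <;>
    rcases Int.units_eq_one_or v with rfl | rfl <;> simp_all

theorem Subgroup.exists_pairwise_inv_mul_notMem {G : Type*} [Group G] (H : Subgroup G)
    [Infinite (G ⧸ H)] : ∃ b : ℕ → G, Pairwise fun i j => (b i)⁻¹ * b j ∉ H := by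
  let e := Infinite.natEmbedding (G ⧸ H)
  refine ⟨fun i => (e i).out, fun i j hij hmem => hij (e.injective ?_)⟩
  rw [← QuotientGroup.out_eq' (e i), ← QuotientGroup.out_eq' (e j)]
  exact QuotientGroup.eq.2 hmem

namespace HNNExtension

open NormalWord

section HalfTree

variable {G : Type*} [Group G] {A B : Subgroup G} (φ : A ≃* B)

local notation "HNN" => HNNExtension G A B φ

theorem of_toSubgroupEquiv (u : ℤˣ) (a : toSubgroup A B u) :
    (of (toSubgroupEquiv φ u a : G) : HNN) = t ^ (u : ℤ) * of (a : G) * t ^ (-(u : ℤ)) := by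
  rcases Int.units_eq_one_or u with rfl | rfl
  · exact equiv_eq_conj (φ := φ) a
  · exact equiv_symm_eq_conj (φ := φ) a

namespace ReducedWord

theorem prod_mk_nil (h : G) (ch) : ReducedWord.prod φ (⟨h, [], ch⟩ : ReducedWord G A B) = of h := by
  simp [ReducedWord.prod]

theorem prod_mk_cons (h : G) (p : ℤˣ × G) (l : List (ℤˣ × G))
    (ch : (p :: l).IsChain fun a b => a.2 ∈ toSubgroup A B a.1 → a.1 = b.1) :
    ReducedWord.prod φ ⟨h, p :: l, ch⟩ =
      of h * t ^ (p.1 : ℤ) * ReducedWord.prod φ ⟨p.2, l, (List.isChain_cons.1 ch).2⟩ := by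
  simp [ReducedWord.prod, mul_assoc]

theorem of_mul_prod_mk (k h : G) (l : List (ℤˣ × G)) (ch) :
    of k * ReducedWord.prod φ (⟨h, l, ch⟩ : ReducedWord G A B) =
      ReducedWord.prod φ ⟨k * h, l, ch⟩ := by
  simp [ReducedWord.prod, mul_assoc]

theorem exists_prod_eq (x : HNN) : ∃ w : ReducedWord G A B, w.prod φ = x := by
  obtain ⟨d⟩ := TransversalPair.nonempty G A B
  exact ⟨(NormalWord.equiv φ d x).toReducedWord, (NormalWord.equiv φ d).symm_apply_apply x⟩

end ReducedWord

open ReducedWord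

/-- The elements whose reduced words begin with `t ^ u`; in the Bass–Serre tree, the `x` with
`x • v₀` beyond the edge from the base vertex `v₀` to `t ^ u • v₀`. -/
def halfTree (u : ℤˣ) : Set HNN :=
  {x | ∃ w : ReducedWord G A B, w.prod φ = x ∧ w.head ∈ toSubgroup A B (-u) ∧
    w.toList.head?.map Prod.fst = some u}

variable {φ} in
theorem mem_halfTree_iff {w : ReducedWord G A B} {u : ℤˣ} :
    w.prod φ ∈ halfTree φ u ↔
      w.head ∈ toSubgroup A B (-u) ∧ w.toList.head?.map Prod.fst = some u := by
  refine ⟨?_, fun h => ⟨w, rfl, h⟩⟩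
  rintro ⟨v, hv, hvh, hvl⟩
  obtain ⟨hfst, hhead⟩ := map_fst_eq_and_of_prod_eq φ hv
  refine ⟨?_, by rw [← List.head?_map, ← hfst, List.head?_map, hvl]⟩
  simpa using mul_mem hvh (hhead u hvl)

theorem disjoint_halfTree_range (u : ℤˣ) :
    Disjoint (halfTree φ u) ((of : G →* HNN).range : Set HNN) := by
  rw [Set.disjoint_right]
  rintro _ ⟨g, rfl⟩
  rw [← prod_mk_nil φ g List.isChain_nil, mem_halfTree_iff]
  simp

variable {φ} in
theorem disjoint_of_smul_halfTree {g : G} {u v : ℤˣ} (h : u = v → g ∉ toSubgroup A B (-u)) :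
    Disjoint ((of g : HNN) • halfTree φ u) (halfTree φ v) := by
  rw [Set.disjoint_left]
  rintro _ ⟨_, ⟨⟨k, l, ch⟩, rfl, hk, hl⟩, rfl⟩ hv
  simp only [smul_eq_mul] at hv
  rw [of_mul_prod_mk, mem_halfTree_iff] at hv
  obtain rfl : u = v := Option.some_injective _ (hl.symm.trans hv.2)
  exact h rfl (by simpa using mul_mem hv.1 (inv_mem hk))

theorem of_smul_halfTree {g : G} {u : ℤˣ} (hg : g ∈ toSubgroup A B (-u)) :
    (of g : HNN) • halfTree φ u = halfTree φ u := by
  suffices ∀ g ∈ toSubgroup A B (-u), (of g : HNN) • halfTree φ u ⊆ halfTree φ u from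
    (this g hg).antisymm (Set.subset_smul_set_iff.2 (by simpa using this g⁻¹ (inv_mem hg)))
  rintro g hg _ ⟨_, ⟨⟨k, l, ch⟩, rfl, hk, hl⟩, rfl⟩
  exact ⟨_, (of_mul_prod_mk φ g k l ch).symm, mul_mem hg hk, hl⟩

theorem disjoint_smul_halfTree_of_inv_mul_notMem {a b : G} {u : ℤˣ}
    (hab : a⁻¹ * b ∉ toSubgroup A B (-u)) :
    Disjoint ((of a : HNN) • halfTree φ u) ((of b : HNN) • halfTree φ u) := by
  rw [← mul_inv_cancel_left a b, map_mul, mul_smul, Set.disjoint_smul_set]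
  exact (disjoint_of_smul_halfTree fun _ => hab).symm

theorem t_zpow_smul_halfTree_neg_subset_compl (u : ℤˣ) :
    (t : HNN) ^ (u : ℤ) • halfTree φ (-u) ⊆ (halfTree φ u)ᶜ := by
  rintro _ ⟨_, ⟨⟨k, _ | ⟨⟨c, g⟩, l⟩, ch⟩, rfl, hk, hl⟩, rfl⟩ hmem
  · simp at hl
  obtain rfl : c = -u := by simpa using hl
  rw [neg_neg] at hk
  let k' : G := toSubgroupEquiv φ u ⟨k, hk⟩
  have hconj : t ^ (u : ℤ) * ReducedWord.prod φ ⟨k, (-u, g) :: l, ch⟩ =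
      ReducedWord.prod φ ⟨k' * g, l, (List.isChain_cons.1 ch).2⟩ := by
    rw [prod_mk_cons, ← of_mul_prod_mk, of_toSubgroupEquiv]
    simp [mul_assoc]
  simp only [smul_eq_mul] at hmem
  rw [hconj, mem_halfTree_iff] at hmem
  obtain ⟨hkg, hl'⟩ := hmem
  obtain ⟨q, l', rfl⟩ : ∃ q l', l = q :: l' := by
    cases l with
    | nil => simp at hl'
    | cons q l' => exact ⟨q, l', rfl⟩
  -- `t ^ (-u) * of g * t ^ u` would be a pinch in the reduced word
  have hg : g ∈ toSubgroup A B (-u) := by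
    simpa [k'] using mul_mem (inv_mem (toSubgroupEquiv φ u ⟨k, hk⟩).2) hkg
  have : -u = q.1 := (List.isChain_cons_cons.1 ch).1 hg
  exact units_ne_neg_self u (by simp_all)

theorem compl_halfTree_subset (u : ℤˣ) :
    (halfTree φ u)ᶜ ⊆ (t : HNN) ^ (u : ℤ) • halfTree φ (-u) := by
  intro x hx
  obtain ⟨⟨h, l, ch⟩, rfl⟩ := exists_prod_eq φ x
  rw [Set.mem_compl_iff, mem_halfTree_iff] at hx
  have ch' : ((-u, h) :: l).IsChain fun a b => a.2 ∈ toSubgroup A B a.1 → a.1 = b.1 := by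
    refine List.isChain_cons.2 ⟨fun q hq hh => ?_, ch⟩
    refine (Int.units_eq_neg_of_ne fun hqu => hx ⟨hh, ?_⟩).symm
    simp [Option.mem_def.1 hq, hqu]
  refine Set.mem_smul_set_iff_inv_smul_mem.2 ⟨⟨1, _, ch'⟩, ?_, by simp, by simp⟩
  rw [prod_mk_cons]
  simp [zpow_neg]

theorem compl_halfTree (u : ℤˣ) : (halfTree φ u)ᶜ = (t : HNN) ^ (u : ℤ) • halfTree φ (-u) :=
  (compl_halfTree_subset φ u).antisymm (t_zpow_smul_halfTree_neg_subset_compl φ u)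

theorem halfTree_eq_smul_compl (c : ℤˣ) :
    halfTree φ c = (t : HNN) ^ (c : ℤ) • (halfTree φ (-c))ᶜ := by
  rw [compl_halfTree, neg_neg, smul_smul, Units.val_neg, ← zpow_add, add_neg_cancel, zpow_zero,
    one_smul]

theorem nested_of_mul_t_zpow (h : G) (c : ℤˣ) {s : Set HNN}
    (hs : s ⊆ (halfTree φ (-c))ᶜ ∨ sᶜ ⊆ (halfTree φ (-c))ᶜ) :
    ((of h : HNN) * t ^ (c : ℤ)) • s ⊆ (of h : HNN) • halfTree φ c ∨
      (((of h : HNN) * t ^ (c : ℤ)) • s)ᶜ ⊆ (of h : HNN) • halfTree φ c := by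
  rwa [halfTree_eq_smul_compl, smul_smul, ← Set.smul_set_compl,
    Set.smul_set_subset_smul_set_iff, Set.smul_set_subset_smul_set_iff]

theorem prod_smul_halfTree_nested (u : ℤˣ) : ∀ (l : List (ℤˣ × G)) (h : G)
    (ch : l.IsChain fun a b => a.2 ∈ toSubgroup A B a.1 → a.1 = b.1),
    ReducedWord.prod φ ⟨h, l, ch⟩ • halfTree φ u ⊆
        (of h : HNN) • halfTree φ ((l.head?.map Prod.fst).getD u) ∨
      (ReducedWord.prod φ ⟨h, l, ch⟩ • halfTree φ u)ᶜ ⊆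
        (of h : HNN) • halfTree φ ((l.head?.map Prod.fst).getD u)
  | [], h, ch => Or.inl (by rw [prod_mk_nil]; exact subset_rfl)
  | (c, g) :: l, h, ch => by
    rw [prod_mk_cons, mul_smul]
    refine nested_of_mul_t_zpow φ h c ?_
    cases l with
    | nil =>
      rw [prod_mk_nil]
      by_cases hg : u = -c ∧ g ∈ toSubgroup A B (-u)
      · rw [of_smul_halfTree φ hg.2, hg.1]
        exact Or.inr subset_rfl
      · exact Or.inl (disjoint_of_smul_halfTree fun huc hg' => hg ⟨huc, hg'⟩).subset_compl_right
    | cons q l =>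
      have hdisj : (of g : HNN) • halfTree φ q.1 ⊆ (halfTree φ (-c))ᶜ := by
        refine (disjoint_of_smul_halfTree fun hqc hg => units_ne_neg_self c ?_).subset_compl_right
        rw [hqc, neg_neg] at hg
        exact ((List.isChain_cons_cons.1 ch).1 hg).trans hqc
      exact (prod_smul_halfTree_nested u (q :: l) g _).imp (·.trans hdisj) (·.trans hdisj)

theorem exists_smul_halfTree_nested (x : HNN) (u : ℤˣ) :
    ∃ (g : G) (c : ℤˣ), x • halfTree φ u ⊆ (of g : HNN) • halfTree φ c ∨
      (x • halfTree φ u)ᶜ ⊆ (of g : HNN) • halfTree φ c := by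
  obtain ⟨⟨h, l, ch⟩, rfl⟩ := exists_prod_eq φ x
  exact ⟨h, _, prod_smul_halfTree_nested φ u l h ch⟩

theorem exists_mem_smul_halfTree {x : HNN} (hx : x ∉ (of : G →* HNN).range) :
    ∃ (g : G) (u : ℤˣ), x ∈ (of g : HNN) • halfTree φ u := by
  obtain ⟨⟨h, _ | ⟨⟨u, g⟩, l⟩, ch⟩, rfl⟩ := exists_prod_eq φ x
  · exact absurd ⟨h, (prod_mk_nil φ h _).symm⟩ hx
  refine ⟨h, u, _, ⟨⟨1, (u, g) :: l, ch⟩, rfl, one_mem _, rfl⟩, ?_⟩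
  simp only [smul_eq_mul]
  rw [of_mul_prod_mk, mul_one]

end HalfTree

variable {G : Type} [Group G] {A B : Subgroup G}

theorem isSingularIn_range_of [Countable G] (φ : A ≃* B) (hA : Infinite (G ⧸ A))
    (hB : Infinite (G ⧸ B)) : IsSingularIn (of : G →* HNNExtension G A B φ).range := by
  have : Countable (of : G →* HNNExtension G A B φ).range := by
    have := (Set.countable_range (of : G →* HNNExtension G A B φ)).to_subtype
    rwa [← MonoidHom.coe_range] at this
  refine isSingularIn_of_halfSpaces (halfTree φ) _ (disjoint_halfTree_range φ) (fun u => ?_)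
    (fun x u => ?_) (fun x hx => ?_)
  · have : Infinite (G ⧸ toSubgroup A B (-u)) := by
      rcases Int.units_eq_one_or u with rfl | rfl <;> simpa
    obtain ⟨b, hb⟩ := (toSubgroup A B (-u)).exists_pairwise_inv_mul_notMem
    exact ⟨fun i => of (b i), fun i => ⟨b i, rfl⟩, fun i j hij =>
      disjoint_smul_halfTree_of_inv_mul_notMem φ (hb hij)⟩
  · obtain ⟨g, c, h⟩ := exists_smul_halfTree_nested φ x u
    exact ⟨of g, ⟨g, rfl⟩, c, h⟩
  · obtain ⟨g, u, h⟩ := exists_mem_smul_halfTree φ hx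
    exact ⟨of g, ⟨g, rfl⟩, u, h⟩

theorem exists_mulEquiv_of_universal {Γ : Type} [Group Γ] {Λ₀ : Subgroup G} {θ : Λ₀ →* G}
    (hθ : Injective θ) (j : G →* Γ) (τ : Γ) (hrel : ∀ g : Λ₀, τ⁻¹ * j g * τ = j (θ g))
    (huniv : ∀ (H : Type) [Group H] (f : G →* H) (x : H),
      (∀ g : Λ₀, x⁻¹ * f g * x = f (θ g)) → ∃! φ : Γ →* H, φ.comp j = f ∧ φ τ = x) :
    ∃ e : Γ ≃* HNNExtension G θ.range Λ₀ (MonoidHom.ofInjective hθ).symm,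
      ∀ g, e (j g) = of g := by
  set φ := (MonoidHom.ofInjective hθ).symm
  have hφ : ∀ g : Λ₀, φ (MonoidHom.ofInjective hθ g) = g :=
    (MonoidHom.ofInjective hθ).symm_apply_apply
  have hof : ∀ g : Λ₀, (t : HNNExtension G θ.range Λ₀ φ)⁻¹ * of (g : G) * t = of (θ g) := by
    intro g
    have h := equiv_eq_conj (φ := φ) (MonoidHom.ofInjective hθ g)
    rw [hφ g] at h
    rw [h]
    group
    rfl
  have hlift : ∀ a : θ.range, τ * j a = j (φ a) * τ := by
    intro a
    obtain ⟨g, rfl⟩ := (MonoidHom.ofInjective hθ).surjective a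
    rw [hφ g, MonoidHom.ofInjective_apply, ← hrel g]
    group
  obtain ⟨Φ, ⟨hΦj, hΦτ⟩, -⟩ := huniv _ of t hof
  let ψ := lift j τ hlift
  obtain ⟨_, _, huniq⟩ := huniv Γ j τ hrel
  have hψΦ : ψ.comp Φ = MonoidHom.id Γ :=
    (huniq _ ⟨by rw [MonoidHom.comp_assoc, hΦj]; ext; simp [ψ], by simp [ψ, hΦτ]⟩).trans
      (huniq _ ⟨rfl, rfl⟩).symm
  have hΦψ : Φ.comp ψ = MonoidHom.id _ := hom_ext
    (by ext g; simpa [ψ] using DFunLike.congr_fun hΦj g) (by simp [ψ, hΦτ])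
  exact ⟨MonoidHom.toMulEquiv Φ ψ hψΦ hΦψ, fun g => DFunLike.congr_fun hΦj g⟩

end HNNExtension

open HNNExtension in
theorem isSingularIn_of_hnn_extension_general
    {Λ Γ : Type} [Group Λ] [Group Γ] [Countable Λ]
    (Λ₀ : Subgroup Λ) (θ : Λ₀ →* Λ) (hθ : Function.Injective θ)
    (j : Λ →* Γ) (τ : Γ)
    (hrel : ∀ g : Λ₀, τ⁻¹ * j g * τ = j (θ g))
    (huniv : ∀ (G : Type) [Group G] (f : Λ →* G) (x : G),
      (∀ g : Λ₀, x⁻¹ * f g * x = f (θ g)) →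
      ∃! φ : Γ →* G, φ.comp j = f ∧ φ τ = x)
    (hindex₁ : Infinite (Λ ⧸ Λ₀)) (hindex₂ : Infinite (Λ ⧸ θ.range)) :
    IsSingularIn j.range := by
  obtain ⟨e, he⟩ := exists_mulEquiv_of_universal hθ j τ hrel huniv
  have hrange : j.range = (of : Λ →* HNNExtension Λ θ.range Λ₀ _).range.comap e.toMonoidHom := by
    ext x
    refine ⟨?_, fun ⟨a, ha⟩ => ⟨a, e.injective ((he a).trans ha)⟩⟩
    rintro ⟨a, rfl⟩
    exact ⟨a, (he a).symm⟩
  rw [hrange]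
  exact (isSingularIn_range_of _ hindex₂ hindex₁).comap e.toMonoidHom
    fun x _ => ⟨e.symm x, e.apply_symm_apply x⟩

/-- Let `Γ = HNN(Λ, Λ₀, θ)` be the HNN extension of `Λ` along an injective
homomorphism `θ : Λ₀ → Λ`: `Γ` is generated by (an injective copy of) `Λ` and a stable letter
`τ` subject to `τ⁻¹ g τ = θ g` for `g ∈ Λ₀`, as expressed by the universal property below.
If both `Λ₀` and `θ Λ₀` have infinite index in `Λ`, then the image of `Λ` in `Γ` is singular
in `Γ`. -/
theorem isSingularIn_of_hnn_extension
    {Λ Γ : Type} [Group Λ] [Group Γ] [Countable Λ] [Countable Γ]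
    (Λ₀ : Subgroup Λ) (θ : Λ₀ →* Λ) (hθ : Function.Injective θ)
    (j : Λ →* Γ) (τ : Γ)
    (hrel : ∀ g : Λ₀, τ⁻¹ * j g * τ = j (θ g))
    (huniv : ∀ (G : Type) [Group G] (f : Λ →* G) (x : G),
      (∀ g : Λ₀, x⁻¹ * f g * x = f (θ g)) →
      ∃! φ : Γ →* G, φ.comp j = f ∧ φ τ = x)
    (hj : Function.Injective j)
    (hindex₁ : Infinite (Λ ⧸ Λ₀)) (hindex₂ : Infinite (Λ ⧸ θ.range)) :
    IsSingularIn j.range :=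
  isSingularIn_of_hnn_extension_general Λ₀ θ hθ j τ hrel huniv hindex₁ hindex₂
end

section
/- Let n ≥ 2. Let P ≤ SL_n(ℝ) be the subgroup of upper triangular matrices (matrices in SL_n(ℝ) whose entries below the diagonal vanish), and let Λ ≤ SL_n(ℤ) be the subgroup of upper triangular matrices in SL_n(ℤ). Equip the coset space SL_n(ℝ)/P with the quotient topology, on which SL_n(ℤ) acts by left multiplication via the inclusion SL_n(ℤ) ⊆ SL_n(ℝ). Then every Λ-invariant Borel probability measure on SL_n(ℝ)/P is the Dirac measure at the identity coset [P]. -/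
/-!
A coset `gP` is the full flag `V₀ ⊂ ⋯ ⊂ Vₙ₋₁` with `Vₘ` spanned by the columns `0, …, m` of `g`,
and `[P]` is the standard flag. For `p < q` the function `‖π_{Vₘ} e_q‖² · dist(e_p, Vₘ)²` is
continuous on `SL_n(ℝ)/P`, and along the transvections `1 + k E_{pq} ∈ Λ` it tends to `0`
pointwise, because they drag every vector with nonzero `q`-th coordinate towards the line `ℝ e_p`.
By `Λ`-invariance and dominated convergence its integral vanishes, so for `μ`-almost every flag,
for all `p < q` and `m`, either `e_q ⊥ Vₘ` or `e_p ∈ Vₘ`; a dimension count shows that such a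
flag is the standard one.
-/

open Matrix

theorem diag_mul_of_upperTriangular {n : ℕ} {R : Type} [CommRing R]
    (U V : Matrix (Fin n) (Fin n) R) (hU : ∀ i j : Fin n, j < i → U i j = 0)
    (hV : ∀ i j : Fin n, j < i → V i j = 0) (i : Fin n) :
    (U * V) i i = U i i * V i i := by
  rw [Matrix.mul_apply]
  apply Finset.sum_eq_single i
  · intro k _ hk
    rcases Ne.lt_or_gt hk with h | h
    · rw [hU i k h, zero_mul]
    · rw [hV k i h, mul_zero]
  · intro h
    exact absurd (Finset.mem_univ i) h

/-- The subgroup `P` of upper triangular matrices in `SL_n(R)` (matrices whose entries below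
the diagonal vanish). -/
def upperTriangularSubgroup (n : ℕ) (R : Type) [CommRing R] :
    Subgroup (SpecialLinearGroup (Fin n) R) where
  carrier := {A | ∀ i j : Fin n, j < i → (A : Matrix (Fin n) (Fin n) R) i j = 0}
  one_mem' := fun i j hij => Matrix.blockTriangular_one (b := (id : Fin n → Fin n)) hij
  mul_mem' := by
    intro A B hA hB i j hij
    have h : Matrix.BlockTriangular
        ((A : Matrix (Fin n) (Fin n) R) * (B : Matrix (Fin n) (Fin n) R)) id :=
      Matrix.BlockTriangular.mul (fun i j h => hA i j h) (fun i j h => hB i j h)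
    have := h (show (id : Fin n → Fin n) j < id i from hij)
    simpa [Matrix.SpecialLinearGroup.coe_mul] using this
  inv_mem' := by
    intro A hA i j hij
    have hdet : IsUnit (A : Matrix (Fin n) (Fin n) R).det := by simp [A.prop]
    have hinv : Invertible (A : Matrix (Fin n) (Fin n) R) :=
      (A : Matrix (Fin n) (Fin n) R).invertibleOfIsUnitDet hdet
    have h : Matrix.BlockTriangular ((A : Matrix (Fin n) (Fin n) R))⁻¹ id :=
      Matrix.blockTriangular_inv_of_blockTriangular (fun i j h => hA i j h)
    have hcoe : ((A⁻¹ : SpecialLinearGroup (Fin n) R) : Matrix (Fin n) (Fin n) R) =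
        ((A : Matrix (Fin n) (Fin n) R))⁻¹ := by
      rw [Matrix.SpecialLinearGroup.coe_inv, Matrix.inv_def]
      simp [A.prop]
    rw [hcoe]
    exact h hij

theorem inv_coe_eq_inv {n : ℕ} {R : Type} [CommRing R] (A : SpecialLinearGroup (Fin n) R) :
    ((A⁻¹ : SpecialLinearGroup (Fin n) R) : Matrix (Fin n) (Fin n) R) =
      ((A : Matrix (Fin n) (Fin n) R))⁻¹ := by
  rw [Matrix.SpecialLinearGroup.coe_inv, Matrix.inv_def]
  simp [A.prop]

/-- The subgroup `N` of upper unitriangular matrices in `SL_n(R)` (upper triangular matrices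
with all diagonal entries equal to `1`). -/
def unitriangularSubgroup (n : ℕ) (R : Type) [CommRing R] :
    Subgroup (SpecialLinearGroup (Fin n) R) where
  carrier := {A | (∀ i j : Fin n, j < i → (A : Matrix (Fin n) (Fin n) R) i j = 0) ∧
    ∀ i : Fin n, (A : Matrix (Fin n) (Fin n) R) i i = 1}
  one_mem' := ⟨fun i j hij => Matrix.blockTriangular_one (b := (id : Fin n → Fin n)) hij,
    fun i => by simp [Matrix.SpecialLinearGroup.coe_one]⟩
  mul_mem' := by
    rintro A B ⟨hA, hA1⟩ ⟨hB, hB1⟩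
    refine ⟨fun i j hij => (upperTriangularSubgroup n R).mul_mem' hA hB i j hij, fun i => ?_⟩
    rw [Matrix.SpecialLinearGroup.coe_mul, diag_mul_of_upperTriangular _ _ hA hB, hA1, hB1,
      one_mul]
  inv_mem' := by
    rintro A ⟨hA, hA1⟩
    have hAinv : ∀ i j : Fin n, j < i →
        ((A⁻¹ : SpecialLinearGroup (Fin n) R) : Matrix (Fin n) (Fin n) R) i j = 0 :=
      (upperTriangularSubgroup n R).inv_mem' hA
    refine ⟨hAinv, fun i => ?_⟩
    have hone : ((A : Matrix (Fin n) (Fin n) R) *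
        ((A⁻¹ : SpecialLinearGroup (Fin n) R) : Matrix (Fin n) (Fin n) R)) = 1 := by
      rw [← Matrix.SpecialLinearGroup.coe_mul, mul_inv_cancel,
        Matrix.SpecialLinearGroup.coe_one]
    have := diag_mul_of_upperTriangular _ _ hA hAinv i
    rw [hone, hA1, one_mul] at this
    simpa using this.symm

noncomputable instance (n : ℕ) : TopologicalSpace (SpecialLinearGroup (Fin n) ℝ) :=
  instTopologicalSpaceSubtype

noncomputable instance (n : ℕ) :
    MeasurableSpace (SpecialLinearGroup (Fin n) ℝ ⧸ upperTriangularSubgroup n ℝ) :=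
  borel _

instance (n : ℕ) :
    BorelSpace (SpecialLinearGroup (Fin n) ℝ ⧸ upperTriangularSubgroup n ℝ) :=
  ⟨rfl⟩

/-- The inclusion `SL_n(ℤ) → SL_n(ℝ)`. -/
noncomputable def slZtoR (n : ℕ) :
    SpecialLinearGroup (Fin n) ℤ →* SpecialLinearGroup (Fin n) ℝ :=
  SpecialLinearGroup.map (Int.castRingHom ℝ)

namespace Matrix

section ColProj

variable {m ι : Type*} [Fintype m] [Fintype ι] [DecidableEq ι] {C : Matrix m ι ℝ}

/-- The orthogonal projection onto the column space of `C`, when the columns are independent. -/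
noncomputable def colProj (C : Matrix m ι ℝ) : Matrix m m ℝ := C * (Cᵀ * C)⁻¹ * Cᵀ

lemma isUnit_det_transpose_mul_self (hC : Function.Injective C.mulVec) :
    IsUnit (Cᵀ * C).det := by
  have := (PosDef.conjTranspose_mul_self C hC).isUnit
  rwa [conjTranspose_eq_transpose_of_trivial, isUnit_iff_isUnit_det] at this

lemma colProj_transpose (C : Matrix m ι ℝ) : (colProj C)ᵀ = colProj C := by
  simp [colProj, transpose_nonsing_inv, Matrix.mul_assoc]

lemma colProj_mul_self (hC : Function.Injective C.mulVec) : colProj C * C = C := by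
  rw [colProj, Matrix.mul_assoc, Matrix.mul_assoc,
    nonsing_inv_mul _ (isUnit_det_transpose_mul_self hC), Matrix.mul_one]

lemma colProj_mul_colProj (hC : Function.Injective C.mulVec) :
    colProj C * colProj C = colProj C := by
  nth_rw 2 [colProj]
  rw [← Matrix.mul_assoc, ← Matrix.mul_assoc, colProj_mul_self hC, colProj]

lemma colProj_mulVec_mulVec (hC : Function.Injective C.mulVec) (y : ι → ℝ) :
    colProj C *ᵥ (C *ᵥ y) = C *ᵥ y := by
  rw [mulVec_mulVec, colProj_mul_self hC]

lemma dotProduct_colProj_mulVec (hC : Function.Injective C.mulVec) (x y : m → ℝ) :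
    x ⬝ᵥ (colProj C *ᵥ y) = (colProj C *ᵥ x) ⬝ᵥ (colProj C *ᵥ y) := by
  conv_lhs => rw [← colProj_mul_colProj hC, ← mulVec_mulVec, dotProduct_mulVec]
  rw [← mulVec_transpose, colProj_transpose]

lemma colProj_apply [DecidableEq m] (C : Matrix m ι ℝ) (a b : m) :
    colProj C a b = Pi.single a 1 ⬝ᵥ (colProj C *ᵥ Pi.single b 1) := by
  simp [mulVec_single]

lemma dotProduct_sub_colProj_mulVec_self (hC : Function.Injective C.mulVec) (x : m → ℝ) :
    (x - colProj C *ᵥ x) ⬝ᵥ (x - colProj C *ᵥ x) = x ⬝ᵥ x - x ⬝ᵥ (colProj C *ᵥ x) := by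
  have h := dotProduct_colProj_mulVec hC x x
  rw [dotProduct_comm] at h
  simp only [sub_dotProduct, dotProduct_sub]
  linarith [dotProduct_comm x (colProj C *ᵥ x)]

lemma dotProduct_sub_colProj_mulVec_le (hC : Function.Injective C.mulVec) (x : m → ℝ)
    (y : ι → ℝ) :
    (x - colProj C *ᵥ x) ⬝ᵥ (x - colProj C *ᵥ x) ≤ (x - C *ᵥ y) ⬝ᵥ (x - C *ᵥ y) := by
  set u := x - colProj C *ᵥ x
  set v := colProj C *ᵥ (x - C *ᵥ y)
  have huv : u ⬝ᵥ v = 0 := by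
    simp only [u, v, sub_dotProduct, dotProduct_colProj_mulVec hC x, sub_self]
  have hxy : x - C *ᵥ y = u + v := by
    simp only [u, v, mulVec_sub, colProj_mulVec_mulVec hC]
    abel
  have hv := dotProduct_star_self_nonneg v
  rw [star_trivial] at hv
  rw [hxy, add_dotProduct, dotProduct_add, dotProduct_add, dotProduct_comm v u, huv]
  linarith

lemma colProj_mul_of_isUnit_det (C : Matrix m ι ℝ) {D : Matrix ι ι ℝ} (hD : IsUnit D.det) :
    colProj (C * D) = colProj C := by
  have hDt : IsUnit Dᵀ.det := by rwa [det_transpose]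
  calc colProj (C * D)
      = C * (D * D⁻¹) * (Cᵀ * C)⁻¹ * ((Dᵀ)⁻¹ * Dᵀ) * Cᵀ := by
        rw [colProj, transpose_mul, show Dᵀ * Cᵀ * (C * D) = Dᵀ * (Cᵀ * C * D) by
          simp only [Matrix.mul_assoc], Matrix.mul_inv_rev, Matrix.mul_inv_rev]
        simp only [Matrix.mul_assoc]
    _ = colProj C := by
        rw [mul_nonsing_inv _ hD, nonsing_inv_mul _ hDt, Matrix.mul_one, Matrix.mul_one, colProj]

lemma _root_.Continuous.matrix_colProj {X : Type*} [TopologicalSpace X] {C : X → Matrix m ι ℝ}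
    (hC : Continuous C) (hinj : ∀ x, Function.Injective (C x).mulVec) :
    Continuous fun x => colProj (C x) := by
  have hgram : Continuous fun x => (C x)ᵀ * C x := hC.matrix_transpose.matrix_mul hC
  have hinv : Continuous fun x => ((C x)ᵀ * C x)⁻¹ := by
    refine continuous_iff_continuousAt.2 fun x => ((continuousAt_matrix_inv _ ?_).comp
      hgram.continuousAt)
    rw [Ring.inverse_eq_inv']
    exact continuousAt_inv₀ (isUnit_det_transpose_mul_self (hinj x)).ne_zero
  exact (hC.matrix_mul hinv).matrix_mul hC.matrix_transpose

variable [DecidableEq m]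

lemma colProj_apply_self (hC : Function.Injective C.mulVec) (a : m) :
    colProj C a a = (colProj C *ᵥ Pi.single a 1) ⬝ᵥ (colProj C *ᵥ Pi.single a 1) := by
  rw [colProj_apply, dotProduct_colProj_mulVec hC]

lemma one_sub_colProj_apply_self (hC : Function.Injective C.mulVec) (a : m) :
    1 - colProj C a a = (Pi.single a 1 - colProj C *ᵥ Pi.single a 1) ⬝ᵥ
      (Pi.single a 1 - colProj C *ᵥ Pi.single a 1) := by
  rw [dotProduct_sub_colProj_mulVec_self hC, ← colProj_apply]
  simp

lemma colProj_apply_self_nonneg (hC : Function.Injective C.mulVec) (a : m) :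
    0 ≤ colProj C a a := by
  simpa [colProj_apply_self hC] using dotProduct_star_self_nonneg (colProj C *ᵥ Pi.single a 1)

lemma colProj_apply_self_le_one (hC : Function.Injective C.mulVec) (a : m) :
    colProj C a a ≤ 1 := by
  have := dotProduct_star_self_nonneg (Pi.single a 1 - colProj C *ᵥ Pi.single a 1)
  rw [star_trivial, ← one_sub_colProj_apply_self hC] at this
  linarith

lemma colProj_apply_self_eq_zero_iff (hC : Function.Injective C.mulVec) (a : m) :
    colProj C a a = 0 ↔ ∀ j, C a j = 0 := by
  refine ⟨fun h j => ?_, fun h => by simp [colProj, mul_apply, h]⟩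
  rw [colProj_apply_self hC, dotProduct_self_eq_zero] at h
  calc C a j = Pi.single a 1 ⬝ᵥ (colProj C *ᵥ (C *ᵥ Pi.single j 1)) := by
        rw [colProj_mulVec_mulVec hC]
        simp [mulVec_single]
    _ = 0 := by rw [dotProduct_colProj_mulVec hC, h, zero_dotProduct]

lemma single_mem_range_of_colProj_apply_self_eq_one (hC : Function.Injective C.mulVec) {a : m}
    (h : colProj C a a = 1) : Pi.single a 1 ∈ LinearMap.range C.mulVecLin := by
  replace h : 1 - colProj C a a = 0 := by rw [h, sub_self]
  rw [one_sub_colProj_apply_self hC, dotProduct_self_eq_zero, sub_eq_zero] at h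
  refine ⟨((Cᵀ * C)⁻¹ * Cᵀ) *ᵥ Pi.single a 1, ?_⟩
  rw [mulVecLin_apply, mulVec_mulVec, ← Matrix.mul_assoc]
  exact h.symm

end ColProj

section ColSpanDefect

variable {m ι : Type*} [Fintype m] [Fintype ι] {C : Matrix m ι ℝ}

open Filter Topology

lemma transvection_mulVec [DecidableEq m] (p q : m) (c : ℝ) (w : m → ℝ) :
    transvection p q c *ᵥ w = w + (c * w q) • Pi.single p 1 := by
  rw [transvection, add_mulVec, one_mulVec, single_mulVec_eq]

lemma injective_mulVec_transvection_mul [DecidableEq m] {p q : m} (hpq : p ≠ q) (c : ℝ)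
    (hC : Function.Injective C.mulVec) : Function.Injective (transvection p q c * C).mulVec := by
  have hT : Function.Injective (transvection p q c).mulVec :=
    mulVec_injective_iff_isUnit.2 ((isUnit_iff_isUnit_det _).2 (by simp [hpq]))
  intro x y h
  simp only [← mulVec_mulVec] at h
  exact hC (hT h)

variable [DecidableEq ι]

/-- For `V` the column space of `C`, this is `‖π_V e_q‖² · dist(e_p, V)²`; it vanishes exactly
when `e_q ⊥ V` or `e_p ∈ V`. -/
noncomputable def colSpanDefect (p q : m) (C : Matrix m ι ℝ) : ℝ :=
  colProj C q q * (1 - colProj C p p)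

lemma colSpanDefect_mul_of_isUnit_det (p q : m) (C : Matrix m ι ℝ) {D : Matrix ι ι ℝ}
    (hD : IsUnit D.det) : colSpanDefect p q (C * D) = colSpanDefect p q C := by
  simp only [colSpanDefect, colProj_mul_of_isUnit_det C hD]

lemma _root_.Continuous.matrix_colSpanDefect {X : Type*} [TopologicalSpace X]
    {C : X → Matrix m ι ℝ} (hC : Continuous C) (hinj : ∀ x, Function.Injective (C x).mulVec)
    (p q : m) : Continuous fun x => colSpanDefect p q (C x) := by
  have hP := hC.matrix_colProj hinj
  exact (hP.matrix_elem q q).mul (continuous_const.sub (hP.matrix_elem p p))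

variable [DecidableEq m]

lemma colSpanDefect_nonneg (hC : Function.Injective C.mulVec) (p q : m) :
    0 ≤ colSpanDefect p q C :=
  mul_nonneg (colProj_apply_self_nonneg hC q) (sub_nonneg.2 (colProj_apply_self_le_one hC p))

lemma colSpanDefect_le_one (hC : Function.Injective C.mulVec) (p q : m) :
    colSpanDefect p q C ≤ 1 :=
  mul_le_one₀ (colProj_apply_self_le_one hC q)
    (sub_nonneg.2 (colProj_apply_self_le_one hC p))
    (sub_le_self _ (colProj_apply_self_nonneg hC p))

lemma row_eq_zero_or_single_mem_range_of_colSpanDefect_eq_zero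
    (hC : Function.Injective C.mulVec) {p q : m} (h : colSpanDefect p q C = 0) :
    (∀ j, C q j = 0) ∨ Pi.single p 1 ∈ LinearMap.range C.mulVecLin := by
  rcases mul_eq_zero.1 h with h | h
  · exact .inl ((colProj_apply_self_eq_zero_iff hC q).1 h)
  · exact .inr (single_mem_range_of_colProj_apply_self_eq_one hC (by linarith))

lemma tendsto_colSpanDefect_transvection_mul {p q : m} (hpq : p ≠ q)
    (hC : Function.Injective C.mulVec) :
    Tendsto (fun k : ℕ => colSpanDefect p q (transvection p q (k : ℝ) * C)) atTop (𝓝 0) := by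
  have hinj (k : ℕ) := injective_mulVec_transvection_mul hpq (k : ℝ) hC
  by_cases hrow : ∀ j, C q j = 0
  · refine tendsto_const_nhds.congr fun k => ?_
    have hrow' : ∀ j, (transvection p q (k : ℝ) * C) q j = 0 := fun j => by
      rw [transvection_mul_apply_of_ne _ _ _ _ hpq.symm, hrow]
    rw [colSpanDefect, (colProj_apply_self_eq_zero_iff (hinj k) q).2 hrow', zero_mul]
  obtain ⟨j, hj⟩ := not_forall.1 hrow
  set x := (C q j)⁻¹ • Pi.single j (1 : ℝ)
  have hx : (C *ᵥ x) q = 1 := by simp [x, mulVec_smul, mulVec_single, hj]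
  have hbound : ∀ k : ℕ, 1 ≤ k → colSpanDefect p q (transvection p q (k : ℝ) * C) ≤
      (k : ℝ)⁻¹ ^ 2 * ((C *ᵥ x) ⬝ᵥ (C *ᵥ x)) := by
    intro k hk
    have hk0 : (k : ℝ) ≠ 0 := by positivity
    have happrox : Pi.single p 1 - (transvection p q (k : ℝ) * C) *ᵥ ((k : ℝ)⁻¹ • x)
        = -((k : ℝ)⁻¹ • C *ᵥ x) := by
      rw [← mulVec_mulVec, mulVec_smul, transvection_mulVec, Pi.smul_apply, hx, smul_eq_mul,
        mul_one, mul_inv_cancel₀ hk0, one_smul]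
      abel
    calc colSpanDefect p q (transvection p q (k : ℝ) * C)
        ≤ 1 - colProj (transvection p q (k : ℝ) * C) p p :=
          mul_le_of_le_one_left (sub_nonneg.2 (colProj_apply_self_le_one (hinj k) p))
            (colProj_apply_self_le_one (hinj k) q)
      _ ≤ (Pi.single p 1 - (transvection p q (k : ℝ) * C) *ᵥ ((k : ℝ)⁻¹ • x)) ⬝ᵥ
          (Pi.single p 1 - (transvection p q (k : ℝ) * C) *ᵥ ((k : ℝ)⁻¹ • x)) := by
          rw [one_sub_colProj_apply_self (hinj k)]
          exact dotProduct_sub_colProj_mulVec_le (hinj k) _ _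
      _ = _ := by
          rw [happrox, neg_dotProduct, dotProduct_neg, neg_neg, smul_dotProduct, dotProduct_smul,
            smul_eq_mul, smul_eq_mul, ← mul_assoc, sq]
  have hlim : Tendsto (fun k : ℕ => (k : ℝ)⁻¹ ^ 2 * ((C *ᵥ x) ⬝ᵥ (C *ᵥ x))) atTop (𝓝 0) := by
    simpa using (tendsto_inv_atTop_nhds_zero_nat.pow 2).mul_const ((C *ᵥ x) ⬝ᵥ (C *ᵥ x))
  exact squeeze_zero' (.of_forall fun k => colSpanDefect_nonneg (hinj k) p q)
    (eventually_atTop.2 ⟨1, hbound⟩) hlim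

end ColSpanDefect

section Triangular

variable {κ ι K : Type*} [Fintype ι] [LinearOrder ι] [Field K]

/-- Its column space is the `m`-th member of the flag of `g`. -/
abbrev leadingCols {R : Type*} (g : Matrix κ ι R) (m : ι) : Matrix κ {j // j ≤ m} R :=
  g.submatrix id Subtype.val

lemma leadingCols_mul_of_isUpperTriangular (g : Matrix κ ι K) {h : Matrix ι ι K}
    (hh : h.IsUpperTriangular) (m : ι) :
    leadingCols (g * h) m =
      leadingCols g m * h.submatrix (Subtype.val : {j // j ≤ m} → ι) Subtype.val := by
  ext r j
  simp only [submatrix_apply, id, mul_apply]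
  rw [← Finset.sum_filter_of_ne (p := (· ≤ m)), Finset.sum_subtype (p := (· ≤ m)) _ (by simp)]
  intro k _ hk
  by_contra hkm
  exact hk (by rw [hh (j.2.trans_lt (not_le.1 hkm)), mul_zero])

lemma IsUpperTriangular.det_submatrix_ne_zero {h : Matrix ι ι K} (hh : h.IsUpperTriangular)
    (hdet : h.det ≠ 0) {ν : Type*} [Fintype ν] [LinearOrder ν] {f : ν → ι} (hf : StrictMono f) :
    (h.submatrix f f).det ≠ 0 := by
  rw [det_of_isUpperTriangular hh, Finset.prod_ne_zero_iff] at hdet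
  rw [det_of_isUpperTriangular (M := h.submatrix f f) fun a b hab => hh (hf hab),
    Finset.prod_ne_zero_iff]
  exact fun a _ => hdet (f a) (Finset.mem_univ _)

end Triangular

/-- By a dimension count the column space is spanned by the `e_p` with `p ∈ s`. -/
lemma apply_eq_zero_of_forall_single_mem_range {K m ι : Type*} [Field K] [Fintype m]
    [DecidableEq m] [Fintype ι] [DecidableEq ι] (C : Matrix m ι K) {s : Finset m}
    (hcard : Fintype.card ι ≤ s.card)
    (hs : ∀ p ∈ s, Pi.single p 1 ∈ LinearMap.range C.mulVecLin) {q : m} (hq : q ∉ s) (j : ι) :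
    C q j = 0 := by
  set e : s → m → K := fun p => Pi.single (p : m) 1
  have he : LinearIndependent K e := by
    simpa only [Function.comp_def, Pi.basisFun_apply] using
      (Pi.basisFun K m).linearIndependent.comp Subtype.val Subtype.val_injective
  have hle : Submodule.span K (Set.range e) ≤ LinearMap.range C.mulVecLin :=
    Submodule.span_le.2 (Set.range_subset_iff.2 fun p => hs p p.2)
  have heq : Submodule.span K (Set.range e) = LinearMap.range C.mulVecLin := by
    refine Submodule.eq_of_le_of_finrank_le hle ?_
    calc Module.finrank K (LinearMap.range C.mulVecLin)
        ≤ Fintype.card ι := by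
          simpa using LinearMap.finrank_range_le C.mulVecLin
      _ ≤ Module.finrank K (Submodule.span K (Set.range e)) := by
          rwa [finrank_span_eq_card he, Fintype.card_coe]
  have hker : Submodule.span K (Set.range e) ≤ LinearMap.ker (LinearMap.proj q) :=
    Submodule.span_le.2 (Set.range_subset_iff.2 fun p => by
      simp [e, show q ≠ p from fun h => hq (h ▸ p.2)])
  have hcol : C *ᵥ Pi.single j 1 ∈ Submodule.span K (Set.range e) := heq ▸ ⟨_, rfl⟩
  simpa [mulVec_single] using hker hcol

end Matrix

section FlagVariety

open Filter Topology Matrix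

variable {n : ℕ}

lemma Matrix.SpecialLinearGroup.transvection_mem_upperTriangularSubgroup {R : Type} [CommRing R]
    {p q : Fin n} (hpq : p < q) (c : R) :
    Matrix.SpecialLinearGroup.transvection hpq.ne c ∈ upperTriangularSubgroup n R := by
  intro i j hji
  have : ¬(p = i ∧ q = j) := fun ⟨hp, hq⟩ => (hp ▸ hq ▸ hji).not_gt hpq
  simp only [Matrix.SpecialLinearGroup.transvection_coe, add_apply,
    one_apply_ne (ne_of_lt hji).symm, single_apply_of_ne _ _ _ _ _ this, add_zero]

lemma slZtoR_transvection {p q : Fin n} (hpq : p ≠ q) (c : ℤ) :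
    slZtoR n (Matrix.SpecialLinearGroup.transvection hpq c) =
      Matrix.SpecialLinearGroup.transvection hpq (c : ℝ) := by
  ext i j
  simp only [slZtoR, Matrix.SpecialLinearGroup.map_apply_coe, RingHom.mapMatrix_apply, map_apply,
    Matrix.SpecialLinearGroup.transvection_coe, Matrix.add_apply, one_apply, single_apply]
  split_ifs <;> simp

lemma injective_mulVec_leadingCols (g : SpecialLinearGroup (Fin n) ℝ) (m : Fin n) :
    Function.Injective (leadingCols (g : Matrix (Fin n) (Fin n) ℝ) m).mulVec := by
  have hg : LinearIndependent ℝ (g : Matrix (Fin n) (Fin n) ℝ).col :=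
    mulVec_injective_iff.1 (mulVec_injective_iff_isUnit.2 (isUnit_iff_isUnit_det _ |>.2 (by simp)))
  exact mulVec_injective_iff.2 (hg.comp Subtype.val Subtype.val_injective)

lemma colSpanDefect_leadingCols_mul_of_mem (p q m : Fin n) (g : SpecialLinearGroup (Fin n) ℝ)
    {h : SpecialLinearGroup (Fin n) ℝ} (hh : h ∈ upperTriangularSubgroup n ℝ) :
    colSpanDefect p q (leadingCols ((g * h : SpecialLinearGroup (Fin n) ℝ) :
      Matrix (Fin n) (Fin n) ℝ) m) =
        colSpanDefect p q (leadingCols (g : Matrix (Fin n) (Fin n) ℝ) m) := by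
  have hup : (h : Matrix (Fin n) (Fin n) ℝ).IsUpperTriangular := fun i j hij => hh i j hij
  have hdet : (h : Matrix (Fin n) (Fin n) ℝ).det ≠ 0 := by simp
  rw [Matrix.SpecialLinearGroup.coe_mul, leadingCols_mul_of_isUpperTriangular _ hup m]
  exact colSpanDefect_mul_of_isUnit_det p q _
    (isUnit_iff_ne_zero.2 (hup.det_submatrix_ne_zero hdet fun _ _ h => h))

noncomputable def flagDefect (p q m : Fin n) :
    SpecialLinearGroup (Fin n) ℝ ⧸ upperTriangularSubgroup n ℝ → ℝ :=
  Quotient.lift (fun g : SpecialLinearGroup (Fin n) ℝ =>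
      colSpanDefect p q (leadingCols (g : Matrix (Fin n) (Fin n) ℝ) m))
    fun a b hab => by
      obtain ⟨h, hh, rfl⟩ : ∃ h ∈ upperTriangularSubgroup n ℝ, a * h = b :=
        ⟨_, QuotientGroup.leftRel_apply.1 hab, by group⟩
      exact (colSpanDefect_leadingCols_mul_of_mem p q m a hh).symm

lemma continuous_flagDefect (p q m : Fin n) : Continuous (flagDefect p q m) :=
  ((continuous_subtype_val.matrix_submatrix id Subtype.val).matrix_colSpanDefect
    (fun g => injective_mulVec_leadingCols g m) p q).quotient_lift _

lemma flagDefect_nonneg (p q m : Fin n)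
    (x : SpecialLinearGroup (Fin n) ℝ ⧸ upperTriangularSubgroup n ℝ) : 0 ≤ flagDefect p q m x := by
  induction x using QuotientGroup.induction_on with
  | H g => exact colSpanDefect_nonneg (injective_mulVec_leadingCols g m) p q

lemma flagDefect_le_one (p q m : Fin n)
    (x : SpecialLinearGroup (Fin n) ℝ ⧸ upperTriangularSubgroup n ℝ) : flagDefect p q m x ≤ 1 := by
  induction x using QuotientGroup.induction_on with
  | H g => exact colSpanDefect_le_one (injective_mulVec_leadingCols g m) p q

lemma tendsto_flagDefect_transvection_smul {p q : Fin n} (hpq : p ≠ q) (m : Fin n)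
    (x : SpecialLinearGroup (Fin n) ℝ ⧸ upperTriangularSubgroup n ℝ) :
    Tendsto (fun k : ℕ => flagDefect p q m
      (Matrix.SpecialLinearGroup.transvection hpq (k : ℝ) • x)) atTop (𝓝 0) := by
  induction x using QuotientGroup.induction_on with
  | H g => exact tendsto_colSpanDefect_transvection_mul hpq (injective_mulVec_leadingCols g m)

lemma mem_upperTriangularSubgroup_of_colSpanDefect_eq_zero (g : SpecialLinearGroup (Fin n) ℝ)
    (h : ∀ p q m : Fin n, p < q →
      colSpanDefect p q (leadingCols (g : Matrix (Fin n) (Fin n) ℝ) m) = 0) :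
    g ∈ upperTriangularSubgroup n ℝ := by
  intro i j hji
  set C := leadingCols (g : Matrix (Fin n) (Fin n) ℝ) j
  by_cases hrow : ∀ k, C i k = 0
  · exact hrow ⟨j, le_rfl⟩
  refine apply_eq_zero_of_forall_single_mem_range C (s := Finset.Iio i) ?_ (fun p hp => ?_)
    (by simp) ⟨j, le_rfl⟩
  · calc Fintype.card {k // k ≤ j}
        ≤ Fintype.card (Finset.Iio i) := Fintype.card_le_of_injective
          (fun k => ⟨k, Finset.mem_Iio.2 (k.2.trans_lt hji)⟩)
          fun a b hab => Subtype.ext (by simpa using hab)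
      _ = (Finset.Iio i).card := Fintype.card_coe _
  · exact (row_eq_zero_or_single_mem_range_of_colSpanDefect_eq_zero
      (injective_mulVec_leadingCols g j) (h p i j (Finset.mem_Iio.1 hp))).resolve_left hrow

lemma eq_mk_one_of_forall_flagDefect_eq_zero
    {x : SpecialLinearGroup (Fin n) ℝ ⧸ upperTriangularSubgroup n ℝ}
    (h : ∀ p q m : Fin n, p < q → flagDefect p q m x = 0) : x = QuotientGroup.mk 1 := by
  induction x using QuotientGroup.induction_on with
  | H g =>
    have hg := mem_upperTriangularSubgroup_of_colSpanDefect_eq_zero g h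
    exact QuotientGroup.eq.2 (by simpa using hg)

end FlagVariety

section Invariance

open MeasureTheory Filter Topology

lemma ae_eq_zero_of_tendsto_comp_measurePreserving {X : Type*} [MeasurableSpace X] {μ : Measure X}
    [IsFiniteMeasure μ] {f : X → ℝ} (hf : Measurable f) {c : ℝ} (hf0 : ∀ x, 0 ≤ f x)
    (hfc : ∀ x, f x ≤ c) {T : ℕ → X → X} (hT : ∀ k, MeasurePreserving (T k) μ μ)
    (hlim : ∀ x, Tendsto (fun k => f (T k x)) atTop (𝓝 0)) : f =ᵐ[μ] 0 := by
  have hnorm : ∀ x, ‖f x‖ ≤ c := fun x => by rw [Real.norm_of_nonneg (hf0 x)]; exact hfc x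
  have hinvariant : ∀ k, ∫ x, f (T k x) ∂μ = ∫ x, f x ∂μ := fun k => by
    rw [← integral_map (hT k).measurable.aemeasurable hf.aestronglyMeasurable, (hT k).map_eq]
  have hdominated : Tendsto (fun k => ∫ x, f (T k x) ∂μ) atTop (𝓝 (∫ _, 0 ∂μ)) :=
    tendsto_integral_of_dominated_convergence (fun _ => c)
      (fun k => (hf.comp (hT k).measurable).aestronglyMeasurable) (integrable_const c)
      (fun k => ae_of_all _ fun x => hnorm (T k x)) (ae_of_all _ hlim)
  simp only [hinvariant, integral_zero] at hdominated
  have hint : Integrable f μ := .of_bound hf.aestronglyMeasurable c (ae_of_all _ hnorm)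
  exact (integral_eq_zero_iff_of_nonneg hf0 hint).1
    (tendsto_nhds_unique tendsto_const_nhds hdominated)

lemma eq_dirac_of_ae_eq {X : Type*} [MeasurableSpace X] {μ : Measure X} [IsProbabilityMeasure μ]
    {a : X} (h : ∀ᵐ x ∂μ, x = a) : μ = Measure.dirac a :=
  calc μ = μ.map id := Measure.map_id.symm
    _ = μ.map fun _ => a := Measure.map_congr h
    _ = Measure.dirac a := by rw [Measure.map_const, measure_univ, one_smul]

end Invariance

/-- Instance search does not see that the topology on `SL_n(ℝ)` fixed above is the one of
`Matrix.SpecialLinearGroup.topologicalGroup`: that needs unfolding `SpecialLinearGroup`. -/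
instance (n : ℕ) : IsTopologicalGroup (SpecialLinearGroup (Fin n) ℝ) :=
  Matrix.SpecialLinearGroup.topologicalGroup

theorem lambda_invariant_measure_eq_dirac_general (n : ℕ) :
    ∀ μ : MeasureTheory.Measure
        (SpecialLinearGroup (Fin n) ℝ ⧸ upperTriangularSubgroup n ℝ),
      MeasureTheory.IsProbabilityMeasure μ →
      (∀ t : SpecialLinearGroup (Fin n) ℤ, t ∈ upperTriangularSubgroup n ℤ →
        μ.map (fun x => slZtoR n t • x) = μ) →
      μ = MeasureTheory.Measure.dirac
        (QuotientGroup.mk (1 : SpecialLinearGroup (Fin n) ℝ)) := by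
  intro μ _ hinv
  have hzero (p q m : Fin n) (hpq : p < q) : ∀ᵐ x ∂μ, flagDefect p q m x = 0 :=
    ae_eq_zero_of_tendsto_comp_measurePreserving (continuous_flagDefect p q m).measurable
      (flagDefect_nonneg p q m) (flagDefect_le_one p q m)
      (T := fun k x => slZtoR n (Matrix.SpecialLinearGroup.transvection hpq.ne (k : ℤ)) • x)
      (fun k => ⟨(continuous_const_smul _).measurable,
        hinv _ (Matrix.SpecialLinearGroup.transvection_mem_upperTriangularSubgroup hpq _)⟩)
      (fun x => by
        simpa [slZtoR_transvection] using tendsto_flagDefect_transvection_smul hpq.ne m x)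
  have hall : ∀ᵐ x ∂μ, ∀ p q m : Fin n, p < q → flagDefect p q m x = 0 := by
    simpa only [Filter.eventually_all, Filter.eventually_imp_distrib_left] using hzero
  exact eq_dirac_of_ae_eq (hall.mono fun x hx => eq_mk_one_of_forall_flagDefect_eq_zero hx)

/-- Every Borel probability measure on `SL_n(ℝ)/P` invariant under the
subgroup `Λ` of upper triangular matrices of `SL_n(ℤ)` (acting by left multiplication via the
inclusion `SL_n(ℤ) ⊆ SL_n(ℝ)`) is the Dirac measure at the identity coset `[P]`. -/
theorem lambda_invariant_measure_eq_dirac (n : ℕ) (hn : 2 ≤ n) :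
    ∀ μ : MeasureTheory.Measure
        (SpecialLinearGroup (Fin n) ℝ ⧸ upperTriangularSubgroup n ℝ),
      MeasureTheory.IsProbabilityMeasure μ →
      (∀ t : SpecialLinearGroup (Fin n) ℤ, t ∈ upperTriangularSubgroup n ℤ →
        μ.map (fun x => slZtoR n t • x) = μ) →
      μ = MeasureTheory.Measure.dirac
        (QuotientGroup.mk (1 : SpecialLinearGroup (Fin n) ℝ)) :=
  lambda_invariant_measure_eq_dirac_general n
end
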